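/- arXiv:2201.01169 — 10 statements merged into one kernel-verified Lean document; each statement's English description precedes it below -/
import Mathlib

section
/- Let τ ≥ 1 and let (η_k)_{k≥0} be positive real numbers such that η_j/η_k < τ for all j, k ≥ 0. Let (α_k)_{k≥0} be a sequence in (0, 1] satisfying, for every k ≥ 1, the recursion 1/α_k² − 1/α_k = (1/α_{k−1}²)·(η_{k−1}/η_k). Then for every k ≥ 0, one has 1/((k + 1/α_0)·√τ) ≤ α_k ≤ 2√τ/(k + 2). -/
/-!
With `s_k = √η_k / α_k` (that is, `γ_{k+1}^{-1/2}`) the recursion reads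
`s_{k+1} (s_{k+1} - √η_{k+1}) = s_k²`, so `s_{k+1} - √η_{k+1}/2` is the positive square root of
`s_k² + η_{k+1}/4` and `s_k + √η_{k+1}/2 ≤ s_{k+1} ≤ s_k + √η_{k+1}`. The ratio condition puts every
`√η_j` between `√η_k/√τ` and `√τ √η_k`, so `s_k` grows linearly in `k` with slopes comparable to
`√η_k`, and `α_k = √η_k / s_k` inherits the bounds.
-/

theorem add_half_le_and_le_add_of_mul_sub_eq_sq {s s' d : ℝ} (hs : 0 ≤ s) (hd : 0 ≤ d)
    (hs' : 0 < s') (h : s' * (s' - d) = s ^ 2) : s + d / 2 ≤ s' ∧ s' ≤ s + d := by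
  have hsq : (s' - d / 2) ^ 2 = s ^ 2 + (d / 2) ^ 2 := by linear_combination h
  have hd_le : d ≤ s' := by nlinarith [sq_nonneg s]
  have hlow : s ≤ s' - d / 2 :=
    (pow_le_pow_iff_left₀ hs (by linarith) two_ne_zero).1 (by nlinarith)
  have hhigh : s' - d / 2 ≤ s + d / 2 :=
    (pow_le_pow_iff_left₀ (by linarith) (by positivity) two_ne_zero).1 (by nlinarith)
  constructor <;> linarith

theorem linear_bounds_of_increment_bounds {u : ℕ → ℝ} {a b : ℝ}
    (h : ∀ k, u k + a ≤ u (k + 1) ∧ u (k + 1) ≤ u k + b) (n : ℕ) :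
    u 0 + n * a ≤ u n ∧ u n ≤ u 0 + n * b := by
  induction n with
  | zero => simp
  | succ n ih =>
    push_cast
    constructor <;> linarith [h n]

theorem sqrt_le_sqrt_mul_sqrt_of_div_lt {a b τ : ℝ} (hb : 0 < b) (h : a / b < τ) :
    √a ≤ √τ * √b :=
  (Real.sqrt_le_sqrt ((div_lt_iff₀ hb).1 h).le).trans_eq (Real.sqrt_mul' τ hb.le)

theorem sqrt_div_mul_sub_eq_sq_of_inv_recursion {α α' η η' : ℝ} (hα : 0 < α) (hα' : 0 < α')
    (hη : 0 < η) (hη' : 0 < η') (h : 1 / α' ^ 2 - 1 / α' = 1 / α ^ 2 * (η / η')) :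
    √η' / α' * (√η' / α' - √η') = (√η / α) ^ 2 := by
  have hsq' : √η' ^ 2 = η' := Real.sq_sqrt hη'.le
  rw [div_pow, Real.sq_sqrt hη.le]
  field_simp at h ⊢
  linear_combination (1 - α') * α ^ 2 * hsq' + h

theorem inv_weight_bounds {τ : ℝ} {η α : ℕ → ℝ} (hη : ∀ k, 0 < η k)
    (hratio : ∀ j k, η j / η k < τ) (hαpos : ∀ k, 0 < α k) (hαle : α 0 ≤ 1)
    (hrec : ∀ k : ℕ,
      1 / (α (k + 1)) ^ 2 - 1 / (α (k + 1)) = 1 / (α k) ^ 2 * (η k / η (k + 1))) (k : ℕ) :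
    ((k : ℝ) + 2) / (2 * √τ) ≤ 1 / α k ∧ 1 / α k ≤ ((k : ℝ) + 1 / α 0) * √τ := by
  have hτ : 0 < √τ := Real.sqrt_pos.2 <| one_pos.trans <| by simpa [(hη 0).ne'] using hratio 0 0
  have hηk : 0 < √(η k) := Real.sqrt_pos.2 (hη k)
  have hcompare (j : ℕ) : √(η j) ≤ √τ * √(η k) :=
    sqrt_le_sqrt_mul_sqrt_of_div_lt (hη k) (hratio j k)
  have hcompare' (j : ℕ) : √(η k) / √τ ≤ √(η j) :=
    (div_le_iff₀' hτ).2 (sqrt_le_sqrt_mul_sqrt_of_div_lt (hη j) (hratio k j))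
  set s : ℕ → ℝ := fun j => √(η j) / α j
  have hstep (j : ℕ) : s j + √(η k) / √τ / 2 ≤ s (j + 1) ∧ s (j + 1) ≤ s j + √τ * √(η k) := by
    have hη' : 0 < √(η (j + 1)) := Real.sqrt_pos.2 (hη (j + 1))
    obtain ⟨hlo, hhi⟩ := add_half_le_and_le_add_of_mul_sub_eq_sq
      (div_pos (Real.sqrt_pos.2 (hη j)) (hαpos j)).le hη'.le (div_pos hη' (hαpos (j + 1)))
      (sqrt_div_mul_sub_eq_sq_of_inv_recursion (hαpos j) (hαpos (j + 1)) (hη j) (hη (j + 1))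
        (hrec j))
    constructor <;> linarith [hcompare (j + 1), hcompare' (j + 1)]
  obtain ⟨hsk_lo, hsk_hi⟩ := linear_bounds_of_increment_bounds hstep k
  have hs0_lo : √(η k) / √τ ≤ s 0 :=
    (hcompare' 0).trans (le_div_self (Real.sqrt_nonneg _) (hαpos 0) hαle)
  have hs0_hi : s 0 ≤ 1 / α 0 * (√τ * √(η k)) := by
    rw [one_div_mul_eq_div]
    exact div_le_div_of_nonneg_right (hcompare 0) (hαpos 0).le
  have hsk : s k = 1 / α k * √(η k) := by rw [one_div_mul_eq_div]
  constructor
  · refine le_of_mul_le_mul_right ?_ hηk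
    calc ((k : ℝ) + 2) / (2 * √τ) * √(η k) = √(η k) / √τ + k * (√(η k) / √τ / 2) := by
          field_simp; ring
      _ ≤ 1 / α k * √(η k) := by linarith
  · refine le_of_mul_le_mul_right ?_ hηk
    linarith

theorem stmt_1_general (τ : ℝ) (η α : ℕ → ℝ)
    (hη : ∀ k, 0 < η k) (hratio : ∀ j k, η j / η k < τ)
    (hαpos : ∀ k, 0 < α k) (hαle : ∀ k, α k ≤ 1)
    (hrec : ∀ k : ℕ,
      1 / (α (k + 1)) ^ 2 - 1 / (α (k + 1)) = 1 / (α k) ^ 2 * (η k / η (k + 1))) :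
    ∀ k : ℕ, 1 / (((k : ℝ) + 1 / α 0) * Real.sqrt τ) ≤ α k ∧
      α k ≤ 2 * Real.sqrt τ / ((k : ℝ) + 2) := by
  intro k
  obtain ⟨hinv_lo, hinv_hi⟩ := inv_weight_bounds hη hratio hαpos (hαle 0) hrec k
  have hinv_pos : 0 < 1 / α k := one_div_pos.2 (hαpos k)
  refine ⟨(one_div_le (hinv_pos.trans_le hinv_hi) (hαpos k)).2 hinv_hi, ?_⟩
  have hτ : 0 < √τ := Real.sqrt_pos.2 <| one_pos.trans <| by simpa [(hη 0).ne'] using hratio 0 0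
  rw [← one_div_div]
  exact (le_one_div (hαpos k) (by positivity)).2 hinv_lo

/-- Bounds on the extrapolation weights `α_k` of the accelerated proximal gradient
method with line search in the convex case: if `η_j / η_k < τ` for all `j, k` and
`1/α_k² − 1/α_k = (1/α_{k−1}²) · (η_{k−1}/η_k)`, then
`1/((k + 1/α₀)√τ) ≤ α_k ≤ 2√τ/(k + 2)`. -/
theorem stmt_1 (τ : ℝ) (hτ : 1 ≤ τ) (η α : ℕ → ℝ)
    (hη : ∀ k, 0 < η k) (hratio : ∀ j k, η j / η k < τ)
    (hαpos : ∀ k, 0 < α k) (hαle : ∀ k, α k ≤ 1)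
    (hrec : ∀ k : ℕ,
      1 / (α (k + 1)) ^ 2 - 1 / (α (k + 1)) = 1 / (α k) ^ 2 * (η k / η (k + 1))) :
    ∀ k : ℕ, 1 / (((k : ℝ) + 1 / α 0) * Real.sqrt τ) ≤ α k ∧
      α k ≤ 2 * Real.sqrt τ / ((k : ℝ) + 2) :=
  stmt_1_general τ η α hη hratio hαpos hαle hrec
end

section
/- Let g be convex, differentiable and μ-strongly convex with μ ≥ 0, let H be a proper convex function, set F = g + H, and let x* be a minimizer of F with F* = F(x*). Let x, z ∈ dom H, γ > 0, α ∈ (0, 1], η > 0 and γ⁺ satisfy γ⁺ = α²/η = (1−α)γ + αμ, and set y = (αγ·z + γ⁺·x)/(αγ + γ⁺). Suppose x⁺ ∈ dom H satisfies: (i) g(x⁺) ≤ g(y) + ⟨∇g(y), x⁺ − y⟩ + (1/(2η))‖x⁺ − y‖², and (ii) there exists a vector e with ‖e‖ ≤ ε (for some ε ≥ 0) such that e − ∇g(y) − (1/η)(x⁺ − y) is a subgradient of H at x⁺. Define z⁺ = x + (1/α)(x⁺ − x). Then F(x⁺) − F* + (γ⁺/2)‖x* − z⁺‖² ≤ (1−α)·[F(x)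 − F* + (γ/2)‖x* − z‖²] + ε·α·‖x* − z⁺‖. -/
/-!
With `u = (1 - α) • x + α • x*`, the inexact prox step compares `F(x⁺)` with the quadratic
model of `g` at `y` evaluated at `u`, plus `H u`; the error `e` costs `⟪e, x⁺ - u⟫`, and
`x⁺ - u = α • (z⁺ - x*)`. Convexity of `H` and strong convexity of `g` bound the model by the
convex combination of `F x` and `F x*`, up to a term `-(α μ / 2) ‖x* - y‖²`. The remaining
proximal term `(1 / (2η)) ‖u - y‖²` is absorbed by the choice of `y`: writing
`u - y = α • (x* - w)`, the relations `γ⁺ = α² / η = (1 - α) γ + α μ` make `w` the weighted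
average of `z` and `y` with weights `(1 - α) γ` and `α μ`, and Jensen for `‖x* - ·‖²` closes
the estimate.
-/

open scoped RealInnerProductSpace

section

variable {E : Type*} [NormedAddCommGroup E] [InnerProductSpace ℝ E]

theorem mul_sq_norm_sub_le_of_smul_eq {a b : ℝ} (ha : 0 ≤ a) (hb : 0 ≤ b) {p q r w : E}
    (hw : (a + b) • w = a • q + b • r) :
    (a + b) * ‖p - w‖ ^ 2 ≤ a * ‖p - q‖ ^ 2 + b * ‖p - r‖ ^ 2 := by
  have hbal : a • (w - q) + b • (w - r) = 0 := by
    linear_combination (norm := module) hw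
  have hcross : a * ⟪p - w, w - q⟫ + b * ⟪p - w, w - r⟫ = 0 := by
    rw [← real_inner_smul_right, ← real_inner_smul_right, ← inner_add_right, hbal,
      inner_zero_right]
  have hq : ‖p - q‖ ^ 2 = ‖p - w‖ ^ 2 + 2 * ⟪p - w, w - q⟫ + ‖w - q‖ ^ 2 := by
    rw [← norm_add_sq_real, sub_add_sub_cancel]
  have hr : ‖p - r‖ ^ 2 = ‖p - w‖ ^ 2 + 2 * ⟪p - w, w - r⟫ + ‖w - r‖ ^ 2 := by
    rw [← norm_add_sq_real, sub_add_sub_cancel]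
  rw [hq, hr]
  nlinarith [mul_nonneg ha (sq_nonneg ‖w - q‖), mul_nonneg hb (sq_nonneg ‖w - r‖)]

theorem inexact_prox_grad_step_le {g H : E → ℝ} {g' : E → E} {η : ℝ} {y xplus e : E}
    (hdescent : g xplus ≤ g y + ⟪g' y, xplus - y⟫ + 1 / (2 * η) * ‖xplus - y‖ ^ 2)
    (hsub : ∀ u : E, H xplus + ⟪e - g' y - (1 / η) • (xplus - y), u - xplus⟫ ≤ H u)
    (u : E) :
    g xplus + H xplus ≤ g y + ⟪g' y, u - y⟫ + H u
      + 1 / (2 * η) * (‖u - y‖ ^ 2 - ‖u - xplus‖ ^ 2) + ⟪e, xplus - u⟫ := by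
  have hsubu := hsub u
  rw [inner_sub_left, inner_sub_left, real_inner_smul_left] at hsubu
  have hthree :
      ‖u - y‖ ^ 2 = ‖u - xplus‖ ^ 2 + 2 * ⟪xplus - y, u - xplus⟫ + ‖xplus - y‖ ^ 2 := by
    rw [real_inner_comm, ← norm_add_sq_real, sub_add_sub_cancel]
  have hsplit : ⟪g' y, u - y⟫ = ⟪g' y, xplus - y⟫ + ⟪g' y, u - xplus⟫ := by
    rw [← inner_add_right, add_comm, sub_add_sub_cancel]
  have herr : ⟪e, xplus - u⟫ = -⟪e, u - xplus⟫ := by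
    rw [← inner_neg_right, neg_sub]
  rw [hthree, hsplit, herr]
  linear_combination hdescent + hsubu

theorem linearization_convexComb_le {g : E → ℝ} {g' : E → E} {μ t : ℝ}
    (hμ : 0 ≤ μ) (hg : ∀ u v : E, g v + ⟪g' v, u - v⟫ + μ / 2 * ‖u - v‖ ^ 2 ≤ g u)
    (ht0 : 0 ≤ t) (ht1 : t ≤ 1) (x p y : E) :
    g y + ⟪g' y, (1 - t) • x + t • p - y⟫ + t * μ / 2 * ‖p - y‖ ^ 2 ≤
      (1 - t) * g x + t * g p := by
  have hsplit : (1 - t) • x + t • p - y = (1 - t) • (x - y) + t • (p - y) := by module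
  rw [hsplit, inner_add_right, real_inner_smul_right, real_inner_smul_right]
  have hx : g y + ⟪g' y, x - y⟫ ≤ g x := by
    have := hg x y
    nlinarith [sq_nonneg ‖x - y‖]
  nlinarith [hg p y, mul_le_mul_of_nonneg_left hx (sub_nonneg.2 ht1)]

theorem extrapolation_sq_norm_le {x y z p : E} {γ μ α η γplus : ℝ} (hγ : 0 ≤ γ) (hμ : 0 ≤ μ)
    (hα : 0 < α) (hα1 : α ≤ 1)
    (hγplus1 : γplus = α ^ 2 / η) (hγplus2 : γplus = (1 - α) * γ + α * μ)
    (hy : (α * γ + γplus) • y = (α * γ) • z + γplus • x) :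
    1 / (2 * η) * ‖(1 - α) • x + α • p - y‖ ^ 2 ≤
      (1 - α) * γ / 2 * ‖p - z‖ ^ 2 + α * μ / 2 * ‖p - y‖ ^ 2 := by
  set w : E := α⁻¹ • (y - (1 - α) • x)
  have hpw : (1 - α) • x + α • p - y = α • (p - w) := by
    simp only [w, smul_sub, smul_inv_smul₀ hα.ne']; abel
  have hw : ((1 - α) * γ + α * μ) • w = ((1 - α) * γ) • z + (α * μ) • y := by
    apply smul_right_injective E hα.ne'
    rw [hγplus2] at hy
    simp only [w, smul_comm α _ (α⁻¹ • _), smul_inv_smul₀ hα.ne']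
    linear_combination (norm := module) (1 - α) • hy
  have hjensen := mul_sq_norm_sub_le_of_smul_eq (p := p)
    (mul_nonneg (sub_nonneg.2 hα1) hγ) (mul_nonneg hα.le hμ) hw
  have hη : 1 / (2 * η) * α ^ 2 = γplus / 2 := by
    rw [hγplus1]; ring
  rw [hpw, norm_smul, mul_pow, Real.norm_eq_abs, sq_abs, ← mul_assoc, hη, hγplus2]
  linarith

end

theorem stmt_2_general {E : Type*} [NormedAddCommGroup E] [InnerProductSpace ℝ E]
    (g H : E → ℝ) (g' : E → E) (μ : ℝ) (hμ : 0 ≤ μ)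
    (hg : ∀ u v : E, g v + ⟪g' v, u - v⟫ + μ / 2 * ‖u - v‖ ^ 2 ≤ g u)
    (hH : ConvexOn ℝ Set.univ H)
    (xstar : E)
    (x z : E) (γ α η γplus ε : ℝ)
    (hγ : 0 < γ) (hα : 0 < α) (hα1 : α ≤ 1)
    (hγplus1 : γplus = α ^ 2 / η) (hγplus2 : γplus = (1 - α) * γ + α * μ)
    (y : E) (hy : y = (α * γ + γplus)⁻¹ • ((α * γ) • z + γplus • x))
    (xplus : E)
    (hdescent : g xplus ≤ g y + ⟪g' y, xplus - y⟫ + 1 / (2 * η) * ‖xplus - y‖ ^ 2)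
    (e : E) (he : ‖e‖ ≤ ε)
    (hsub : ∀ u : E,
      H xplus + ⟪e - g' y - (1 / η) • (xplus - y), u - xplus⟫ ≤ H u)
    (zplus : E) (hzplus : zplus = x + (1 / α) • (xplus - x)) :
    g xplus + H xplus - (g xstar + H xstar) + γplus / 2 * ‖xstar - zplus‖ ^ 2 ≤
      (1 - α) * (g x + H x - (g xstar + H xstar) + γ / 2 * ‖xstar - z‖ ^ 2) +
        ε * α * ‖xstar - zplus‖ := by
  have hs : (α * γ + γplus) • y = (α * γ) • z + γplus • x := by
    have hpos : 0 < α * γ + γplus := by rw [hγplus2]; linarith [mul_nonneg hα.le hμ]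
    rw [hy, smul_inv_smul₀ hpos.ne']
  set u : E := (1 - α) • x + α • xstar
  have hxu : xplus - u = α • (zplus - xstar) := by
    have hαz : α • zplus = α • x + (xplus - x) := by
      rw [hzplus, smul_add, smul_smul, mul_one_div_cancel hα.ne', one_smul]
    rw [smul_sub, hαz]; module
  have hdist : ‖u - xplus‖ ^ 2 = α ^ 2 * ‖xstar - zplus‖ ^ 2 := by
    rw [← norm_neg, neg_sub, hxu, norm_smul, mul_pow, Real.norm_eq_abs, sq_abs, norm_sub_rev]
  have herr : ⟪e, xplus - u⟫ ≤ ε * α * ‖xstar - zplus‖ :=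
    calc ⟪e, xplus - u⟫ ≤ ‖e‖ * ‖xplus - u‖ := real_inner_le_norm _ _
      _ ≤ ε * ‖xplus - u‖ := mul_le_mul_of_nonneg_right he (norm_nonneg _)
      _ = ε * α * ‖xstar - zplus‖ := by
        rw [hxu, norm_smul, Real.norm_of_nonneg hα.le, norm_sub_rev, mul_assoc]
  have hcoef : 1 / (2 * η) * α ^ 2 = γplus / 2 := by rw [hγplus1]; ring
  have hstep := inexact_prox_grad_step_le hdescent hsub u
  have hmodel := linearization_convexComb_le hμ hg hα.le hα1 x xstar y
  have hHu : H u ≤ (1 - α) * H x + α * H xstar :=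
    hH.2 (Set.mem_univ x) (Set.mem_univ xstar) (by linarith) hα.le (by ring)
  have hgeom := extrapolation_sq_norm_le (p := xstar) hγ.le hμ hα hα1 hγplus1 hγplus2 hs
  rw [hdist] at hstep
  linear_combination hstep + hmodel + hHu + hgeom + herr - ‖xstar - zplus‖ ^ 2 * hcoef

/-- One-step progress inequality of the inexact accelerated proximal gradient method:
if `g` is `μ`-strongly convex with gradient `g'`, `H` is convex, `F = g + H` is minimized
at `x*`, the parameters satisfy `γ⁺ = α²/η = (1−α)γ + αμ`,
`y = (αγ z + γ⁺ x)/(αγ + γ⁺)`, the descent condition holds at `x⁺`,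
and `e − ∇g(y) − (1/η)(x⁺ − y)` is a subgradient of `H` at `x⁺` with `‖e‖ ≤ ε`,
then with `z⁺ = x + (1/α)(x⁺ − x)`:
`F(x⁺) − F* + (γ⁺/2)‖x* − z⁺‖² ≤ (1−α)[F(x) − F* + (γ/2)‖x* − z‖²] + εα‖x* − z⁺‖`. -/
theorem stmt_2 {E : Type*} [NormedAddCommGroup E] [InnerProductSpace ℝ E]
    (g H : E → ℝ) (g' : E → E) (μ : ℝ) (hμ : 0 ≤ μ)
    (hg : ∀ u v : E, g v + ⟪g' v, u - v⟫ + μ / 2 * ‖u - v‖ ^ 2 ≤ g u)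
    (hH : ConvexOn ℝ Set.univ H)
    (xstar : E) (hxstar : ∀ u : E, g xstar + H xstar ≤ g u + H u)
    (x z : E) (γ α η γplus ε : ℝ)
    (hγ : 0 < γ) (hα : 0 < α) (hα1 : α ≤ 1) (hη : 0 < η) (hε : 0 ≤ ε)
    (hγplus1 : γplus = α ^ 2 / η) (hγplus2 : γplus = (1 - α) * γ + α * μ)
    (y : E) (hy : y = (α * γ + γplus)⁻¹ • ((α * γ) • z + γplus • x))
    (xplus : E)
    (hdescent : g xplus ≤ g y + ⟪g' y, xplus - y⟫ + 1 / (2 * η) * ‖xplus - y‖ ^ 2)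
    (e : E) (he : ‖e‖ ≤ ε)
    (hsub : ∀ u : E,
      H xplus + ⟪e - g' y - (1 / η) • (xplus - y), u - xplus⟫ ≤ H u)
    (zplus : E) (hzplus : zplus = x + (1 / α) • (xplus - x)) :
    g xplus + H xplus - (g xstar + H xstar) + γplus / 2 * ‖xstar - zplus‖ ^ 2 ≤
      (1 - α) * (g x + H x - (g xstar + H xstar) + γ / 2 * ‖xstar - z‖ ^ 2) +
        ε * α * ‖xstar - zplus‖ :=
  stmt_2_general g H g' μ hμ hg hH xstar x z γ α η γplus ε hγ hα hα1 hγplus1 hγplus2 y hy xplus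
    hdescent e he hsub zplus hzplus
end

section
/- Let F attain its minimum value F* at x*, and let (x^k)_{k≥0}, (z^k)_{k≥0} be sequences with F(x^k) ≥ F* for all k. Let L̲ > 0 and κ ≥ 1, and let α_k ∈ [1/√κ, 1], η_k ∈ (0, 1/L̲], γ_k ≥ 0 with γ_{k+1} = α_k²/η_k, and ε_k ≥ 0 for all k ≥ 0. Assume that for every k ≥ 0: F(x^{k+1}) − F* + (γ_{k+1}/2)‖x* − z^{k+1}‖² ≤ (1−α_k)·[F(x^k) − F* + (γ_k/2)‖x* − z^k‖²] + ε_k·α_k·‖x* − z^{k+1}‖. Fix c ∈ [0, 1) and define ψ_k = F(x^k) − F* + (1 − (1−c)α_k)·(γ_k/2)·‖x* − z^k‖². Then for every k ≥ 0: ψ_{k+1} ≤ [∏_{j=0}^{k}(1 − cα_j)]·(ψ_0 + (√κ/(2(1−c)²·L̲))·Σ_{t=0}^{k} ε_t²/∏_{j=0}^{t−1}(1 − cα_j)), where an empty product equals 1. -/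
/-!
With `ψ_k` the potential of the statement, one step of the method gives the perturbed contraction
`ψ_{k+1} ≤ (1 - c α_k) (ψ_k + C ε_k²)`, `C = √κ / (2 (1 - c)² L̲)`. The old potential is
contracted because `1 - α ≤ (1 - c α)(1 - (1 - c) α)`. The inexactness term `ε_k α_k ‖x* - z^{k+1}‖`
is absorbed, by Young's inequality, into the part `(1 - c) α_{k+1} (γ_{k+1}/2) ‖x* - z^{k+1}‖²` of
the new distance term that `ψ_{k+1}` leaves out, at the price `ε_k² η_k / (2 (1 - c) α_{k+1})`,
and `η_k ≤ 1/L̲`, `1/α_{k+1} ≤ √κ` bound this by `(1 - c α_k) C ε_k²`. Unrolling the recursion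
gives the claim.
-/

theorem le_prod_range_mul_add_sum_div_of_le_mul_add {ψ q d : ℕ → ℝ} (hd : ∀ j, 0 < d j)
    (hψ : ∀ k, ψ (k + 1) ≤ d k * (ψ k + q k)) (n : ℕ) :
    ψ n ≤ (∏ j ∈ Finset.range n, d j) *
      (ψ 0 + ∑ t ∈ Finset.range n, q t / ∏ j ∈ Finset.range t, d j) := by
  induction n with
  | zero => simp
  | succ n ih =>
    have hP : (∏ j ∈ Finset.range n, d j) ≠ 0 := (Finset.prod_pos fun j _ => hd j).ne'
    calc ψ (n + 1) ≤ d n * (ψ n + q n) := hψ n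
      _ ≤ d n * ((∏ j ∈ Finset.range n, d j) *
            (ψ 0 + ∑ t ∈ Finset.range n, q t / ∏ j ∈ Finset.range t, d j) + q n) := by
          gcongr
          exact (hd n).le
      _ = _ := by
          rw [Finset.prod_range_succ, Finset.sum_range_succ]
          field_simp
          ring

theorem mul_le_mul_sq_add_sq_div {B : ℝ} (hB : 0 < B) (a r : ℝ) :
    a * r ≤ B * r ^ 2 + a ^ 2 / (4 * B) := by
  have h : 0 ≤ (2 * B * r - a) ^ 2 / (4 * B) := by positivity
  have h' : (2 * B * r - a) ^ 2 / (4 * B) = B * r ^ 2 + a ^ 2 / (4 * B) - a * r := by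
    field_simp
    ring
  linarith

section PotentialStep

variable {c α : ℝ}

theorem one_sub_mul_add_le (hc0 : 0 ≤ c) (hc1 : c ≤ 1) (hα : 0 ≤ α) {f g : ℝ}
    (hf : 0 ≤ f) (hg : 0 ≤ g) :
    (1 - α) * (f + g) ≤ (1 - c * α) * (f + (1 - (1 - c) * α) * g) := by
  have hf' : (1 - α) * f ≤ (1 - c * α) * f := by
    gcongr
    nlinarith
  have hg' : (1 - α) * g ≤ (1 - c * α) * (1 - (1 - c) * α) * g := by
    gcongr
    nlinarith [mul_nonneg (mul_nonneg hc0 (sub_nonneg.2 hc1)) (sq_nonneg α)]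
  linarith

theorem inexact_term_le {α' η γ' s L : ℝ} (hc0 : 0 ≤ c) (hc1 : c < 1) (hα0 : 0 < α)
    (hα1 : α ≤ 1) (hs : 0 < s) (hα' : 1 / s ≤ α') (hη : 0 < η) (hL : 0 < L) (hηL : η ≤ 1 / L)
    (hγ' : γ' = α ^ 2 / η) (ε r : ℝ) :
    ε * α * r - (1 - c) * α' * (γ' / 2) * r ^ 2 ≤
      (1 - c * α) * (s / (2 * (1 - c) ^ 2 * L) * ε ^ 2) := by
  have h1c : 0 < 1 - c := by linarith
  have hα'0 : 0 < α' := lt_of_lt_of_le (by positivity) hα'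
  have hB : 0 < (1 - c) * α' * (γ' / 2) := by rw [hγ']; positivity
  have hinv : 1 / α' ≤ s := (one_div_le hα'0 hs).2 hα'
  calc ε * α * r - (1 - c) * α' * (γ' / 2) * r ^ 2
      ≤ (ε * α) ^ 2 / (4 * ((1 - c) * α' * (γ' / 2))) := by
        linarith [mul_le_mul_sq_add_sq_div hB (ε * α) r]
    _ = ε ^ 2 / (2 * (1 - c)) * η * (1 / α') := by
        rw [hγ']
        field_simp
        ring
    _ ≤ ε ^ 2 / (2 * (1 - c)) * (1 / L) * s := by gcongr
    _ = (1 - c) * (s / (2 * (1 - c) ^ 2 * L) * ε ^ 2) := by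
        field_simp
    _ ≤ (1 - c * α) * (s / (2 * (1 - c) ^ 2 * L) * ε ^ 2) := by
        gcongr
        nlinarith

end PotentialStep

theorem stmt_3_general {E : Type*} [NormedAddCommGroup E]
    (F : E → ℝ) (xstar : E)
    (x z : ℕ → E) (hFk : ∀ k, F xstar ≤ F (x k))
    (Lb κ : ℝ) (hLb : 0 < Lb) (hκ : 1 ≤ κ)
    (α η γ ε : ℕ → ℝ)
    (hαlow : ∀ k, 1 / Real.sqrt κ ≤ α k) (hαup : ∀ k, α k ≤ 1)
    (hηpos : ∀ k, 0 < η k) (hηup : ∀ k, η k ≤ 1 / Lb)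
    (hγ : ∀ k, 0 ≤ γ k) (hγrec : ∀ k, γ (k + 1) = (α k) ^ 2 / η k)
    (hstep : ∀ k : ℕ,
      F (x (k + 1)) - F xstar + γ (k + 1) / 2 * ‖xstar - z (k + 1)‖ ^ 2 ≤
        (1 - α k) * (F (x k) - F xstar + γ k / 2 * ‖xstar - z k‖ ^ 2) +
          ε k * α k * ‖xstar - z (k + 1)‖)
    (c : ℝ) (hc0 : 0 ≤ c) (hc1 : c < 1) :
    ∀ k : ℕ,
      F (x (k + 1)) - F xstar +
          (1 - (1 - c) * α (k + 1)) * (γ (k + 1) / 2) * ‖xstar - z (k + 1)‖ ^ 2 ≤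
        (∏ j ∈ Finset.range (k + 1), (1 - c * α j)) *
          ((F (x 0) - F xstar + (1 - (1 - c) * α 0) * (γ 0 / 2) * ‖xstar - z 0‖ ^ 2) +
            Real.sqrt κ / (2 * (1 - c) ^ 2 * Lb) *
              ∑ t ∈ Finset.range (k + 1),
                (ε t) ^ 2 / ∏ j ∈ Finset.range t, (1 - c * α j)) := by
  have hs : 0 < Real.sqrt κ := Real.sqrt_pos.2 (by linarith)
  have hαpos : ∀ j, 0 < α j := fun j => lt_of_lt_of_le (by positivity) (hαlow j)
  have hd : ∀ j, 0 < 1 - c * α j := fun j => by nlinarith [hαup j, hαpos j]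
  set C := Real.sqrt κ / (2 * (1 - c) ^ 2 * Lb)
  set ψ : ℕ → ℝ := fun n =>
    F (x n) - F xstar + (1 - (1 - c) * α n) * (γ n / 2) * ‖xstar - z n‖ ^ 2 with hψ
  have hcontr : ∀ k, ψ (k + 1) ≤ (1 - c * α k) * (ψ k + C * ε k ^ 2) := fun k => by
    have hold := one_sub_mul_add_le hc0 hc1.le (hαpos k).le (sub_nonneg.2 (hFk k))
      (by have := hγ k; positivity : 0 ≤ γ k / 2 * ‖xstar - z k‖ ^ 2)
    have hnew := inexact_term_le hc0 hc1 (hαpos k) (hαup k) hs (hαlow (k + 1)) (hηpos k) hLb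
      (hηup k) (hγrec k) (ε k) ‖xstar - z (k + 1)‖
    simp only [hψ]
    linear_combination hstep k + hold + hnew
  intro k
  have h := le_prod_range_mul_add_sum_div_of_le_mul_add hd hcontr (k + 1)
  simpa only [hψ, Finset.mul_sum, mul_div_assoc] using h

/-- Accumulated progress inequality of the inexact APG method in the strongly convex case:
if the per-step inequality holds with `α_k ∈ [1/√κ, 1]`, `η_k ∈ (0, 1/L̲]`,
`γ_{k+1} = α_k²/η_k`, then with `ψ_k = F(x^k) − F* + (1 − (1−c)α_k)(γ_k/2)‖x* − z^k‖²`,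
`ψ_{k+1} ≤ ∏_{j≤k}(1 − cα_j) (ψ₀ + (√κ/(2(1−c)²L̲)) Σ_{t≤k} ε_t²/∏_{j<t}(1 − cα_j))`. -/
theorem stmt_3 {E : Type*} [NormedAddCommGroup E]
    (F : E → ℝ) (xstar : E) (hmin : ∀ u, F xstar ≤ F u)
    (x z : ℕ → E) (hFk : ∀ k, F xstar ≤ F (x k))
    (Lb κ : ℝ) (hLb : 0 < Lb) (hκ : 1 ≤ κ)
    (α η γ ε : ℕ → ℝ)
    (hαlow : ∀ k, 1 / Real.sqrt κ ≤ α k) (hαup : ∀ k, α k ≤ 1)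
    (hηpos : ∀ k, 0 < η k) (hηup : ∀ k, η k ≤ 1 / Lb)
    (hγ : ∀ k, 0 ≤ γ k) (hγrec : ∀ k, γ (k + 1) = (α k) ^ 2 / η k)
    (hε : ∀ k, 0 ≤ ε k)
    (hstep : ∀ k : ℕ,
      F (x (k + 1)) - F xstar + γ (k + 1) / 2 * ‖xstar - z (k + 1)‖ ^ 2 ≤
        (1 - α k) * (F (x k) - F xstar + γ k / 2 * ‖xstar - z k‖ ^ 2) +
          ε k * α k * ‖xstar - z (k + 1)‖)
    (c : ℝ) (hc0 : 0 ≤ c) (hc1 : c < 1) :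
    ∀ k : ℕ,
      F (x (k + 1)) - F xstar +
          (1 - (1 - c) * α (k + 1)) * (γ (k + 1) / 2) * ‖xstar - z (k + 1)‖ ^ 2 ≤
        (∏ j ∈ Finset.range (k + 1), (1 - c * α j)) *
          ((F (x 0) - F xstar + (1 - (1 - c) * α 0) * (γ 0 / 2) * ‖xstar - z 0‖ ^ 2) +
            Real.sqrt κ / (2 * (1 - c) ^ 2 * Lb) *
              ∑ t ∈ Finset.range (k + 1),
                (ε t) ^ 2 / ∏ j ∈ Finset.range t, (1 - c * α j)) :=
  stmt_3_general F xstar x z hFk Lb κ hLb hκ α η γ ε hαlow hαup hηpos hηup hγ hγrec hstep c hc0 hc1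
end

section
/- Let (u_k)_{k≥1} be a sequence of nonnegative real numbers, C ≥ 0 a constant, and (λ_i)_{i≥1} nonnegative reals. Suppose u_k² ≤ C + Σ_{i=1}^{k} λ_i·u_i for all k ≥ 1. Then u_k ≤ Σ_{i=1}^{k} λ_i + √C for all k ≥ 1. -/
/-! Let `j ≤ k` be an index at which `u` is maximal on `{1, …, k}`. Bounding every `u i` in the
hypothesis at `j` by `u j` gives the scalar inequality `u j ^ 2 ≤ C + S * u j` with
`S = ∑_{i ≤ k} λ i`, whence `u j - S ≤ √C`, and `u k ≤ u j`. -/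

open Finset

theorem le_add_sqrt_of_sq_le_add_mul {x S C : ℝ} (hS : 0 ≤ S) (h : x ^ 2 ≤ C + S * x) :
    x ≤ S + √C := by
  rcases le_or_gt x S with hxS | hSx
  · linarith [Real.sqrt_nonneg C]
  · have hsq : (x - S) ^ 2 ≤ C := by nlinarith
    linarith [Real.le_sqrt_of_sq_le hsq]

theorem sum_mul_le_sum_mul_of_subset {ι : Type*} {s t : Finset ι} {lam u : ι → ℝ} {M : ℝ}
    (hst : s ⊆ t) (hlam : ∀ i ∈ t, 0 ≤ lam i) (hu : ∀ i ∈ s, u i ≤ M) (hM : 0 ≤ M) :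
    ∑ i ∈ s, lam i * u i ≤ (∑ i ∈ t, lam i) * M :=
  calc ∑ i ∈ s, lam i * u i
      ≤ ∑ i ∈ s, lam i * M :=
        sum_le_sum fun i hi => mul_le_mul_of_nonneg_left (hu i hi) (hlam i (hst hi))
    _ = (∑ i ∈ s, lam i) * M := (sum_mul s lam M).symm
    _ ≤ (∑ i ∈ t, lam i) * M :=
        mul_le_mul_of_nonneg_right
          (sum_le_sum_of_subset_of_nonneg hst fun i hi _ => hlam i hi) hM

theorem stmt_7_general (u lam : ℕ → ℝ) (C : ℝ)
    (hlam : ∀ i : ℕ, 1 ≤ i → 0 ≤ lam i)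
    (h : ∀ k : ℕ, 1 ≤ k → (u k) ^ 2 ≤ C + ∑ i ∈ Finset.Icc 1 k, lam i * u i) :
    ∀ k : ℕ, 1 ≤ k → u k ≤ ∑ i ∈ Finset.Icc 1 k, lam i + Real.sqrt C := by
  intro k hk
  obtain ⟨j, hj, hmax⟩ := exists_max_image (Icc 1 k) u ⟨k, mem_Icc.mpr ⟨hk, le_rfl⟩⟩
  have hlam' : ∀ i ∈ Icc 1 k, 0 ≤ lam i := fun i hi => hlam i (mem_Icc.mp hi).1
  have hS : 0 ≤ ∑ i ∈ Icc 1 k, lam i := sum_nonneg hlam'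
  refine (hmax k (mem_Icc.mpr ⟨hk, le_rfl⟩)).trans ?_
  rcases le_or_gt (u j) 0 with hneg | hpos
  · linarith [Real.sqrt_nonneg C]
  have hsub : Icc 1 j ⊆ Icc 1 k := Icc_subset_Icc_right (mem_Icc.mp hj).2
  refine le_add_sqrt_of_sq_le_add_mul hS ((h j (mem_Icc.mp hj).1).trans ?_)
  gcongr
  exact sum_mul_le_sum_mul_of_subset hsub hlam' (fun i hi => hmax i (hsub hi)) hpos.le

/-- Technical lemma on nonnegative sequences: if `u_k² ≤ C + Σ_{i=1}^k λ_i u_i` for all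
`k ≥ 1`, with `C ≥ 0` and `λ_i ≥ 0`, then `u_k ≤ Σ_{i=1}^k λ_i + √C` for all `k ≥ 1`. -/
theorem stmt_7 (u lam : ℕ → ℝ) (C : ℝ) (hC : 0 ≤ C)
    (hu : ∀ k : ℕ, 1 ≤ k → 0 ≤ u k) (hlam : ∀ i : ℕ, 1 ≤ i → 0 ≤ lam i)
    (h : ∀ k : ℕ, 1 ≤ k → (u k) ^ 2 ≤ C + ∑ i ∈ Finset.Icc 1 k, lam i * u i) :
    ∀ k : ℕ, 1 ≤ k → u k ≤ ∑ i ∈ Finset.Icc 1 k, lam i + Real.sqrt C :=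
  stmt_7_general u lam C hlam h
end

section
/- Let F attain its minimum value F* at a point x*, and suppose the sequences (x^k)_{k≥0}, (z^k)_{k≥0} satisfy F(x^k) ≥ F* for all k. Let γ_0 > 0, α_k ∈ (0,1), η_k > 0 and ε_k ≥ 0 satisfy γ_{k+1} = α_k²/η_k = (1−α_k)γ_k for all k ≥ 0, and define φ_k = F(x^k) − F* + (γ_k/2)‖x* − z^k‖². Assume for every k ≥ 0 that φ_{k+1} ≤ (1−α_k)·φ_k + ε_k·α_k·‖x* − z^{k+1}‖. Then for every k ≥ 0: ‖x* − z^{k+1}‖ ≤ 2·Σ_{t=0}^{k} (η_t·ε_t/α_t) + √((2η_0(1−α_0)/α_0²)·φ_0). -/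
/-!
Normalise the Lyapunov function by the step parameter, `u_k = φ_k / γ_k`. Dividing the
progress inequality by `γ_{k+1} = (1 - α_k) γ_k = α_k² / η_k` gives
`u_{k+1} ≤ u_k + (η_k ε_k / α_k) ‖x* - z^{k+1}‖`, while `F(x^k) ≥ F*` gives
`‖x* - z^k‖² ≤ 2 u_k`. Solving the resulting quadratic inequality for `√(2 u_{k+1})` shows that
`√(2 u_k)` grows by at most `2 η_k ε_k / α_k` per step, and `2 u_0` is the quantity under the
square root in the claim.
-/

theorem le_two_mul_add_sqrt_of_sq_div_two_le {w c u : ℝ} (hc : 0 ≤ c)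
    (h : w ^ 2 / 2 ≤ u + c * w) : w ≤ 2 * c + √(2 * u) := by
  by_contra! hlt
  -- then `2u < (w - 2c)²`, so `w² / 2 ≤ u + c w` would force `c (w - 2c) < 0`
  have hsq : 2 * u < (w - 2 * c) ^ 2 := Real.lt_sq_of_sqrt_lt (by linarith)
  nlinarith [Real.sqrt_nonneg (2 * u)]

theorem sqrt_two_mul_le_of_le_add_mul {u₀ u₁ c w : ℝ} (hc : 0 ≤ c)
    (hw : w ^ 2 / 2 ≤ u₁) (hu : u₁ ≤ u₀ + c * w) : √(2 * u₁) ≤ 2 * c + √(2 * u₀) := by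
  have hw_le : w ≤ √(2 * u₁) := (le_abs_self w).trans (Real.abs_le_sqrt (by linarith))
  have hsq : √(2 * u₁) ^ 2 = 2 * u₁ := Real.sq_sqrt (by nlinarith [sq_nonneg w])
  refine le_two_mul_add_sqrt_of_sq_div_two_le hc ?_
  nlinarith [mul_le_mul_of_nonneg_left hw_le hc]

theorem le_two_mul_sum_add_sqrt {u c w : ℕ → ℝ} (hc : ∀ k, 0 ≤ c k)
    (hw : ∀ k, w k ^ 2 / 2 ≤ u k) (hu : ∀ k, u (k + 1) ≤ u k + c k * w (k + 1)) (k : ℕ) :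
    w (k + 1) ≤ 2 * ∑ t ∈ Finset.range (k + 1), c t + √(2 * u 0) := by
  have hsqrt : ∀ k, √(2 * u k) ≤ 2 * ∑ t ∈ Finset.range k, c t + √(2 * u 0) := by
    intro k
    induction k with
    | zero => simp
    | succ k ih =>
      have := sqrt_two_mul_le_of_le_add_mul (hc k) (hw (k + 1)) (hu k)
      rw [Finset.sum_range_succ]
      linarith
  exact (le_abs_self _).trans ((Real.abs_le_sqrt (by linarith [hw (k + 1)])).trans (hsqrt _))

theorem div_le_div_add_mul_of_le_one_sub_mul_add {φ₀ φ₁ γ₀ γ₁ α η ε w : ℝ}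
    (hγ₀ : 0 < γ₀) (hα : 0 < α) (hη : 0 < η)
    (hγ₁ : γ₁ = α ^ 2 / η) (hγ₁' : γ₁ = (1 - α) * γ₀)
    (h : φ₁ ≤ (1 - α) * φ₀ + ε * α * w) : φ₁ / γ₁ ≤ φ₀ / γ₀ + η * ε / α * w := by
  have hγ₁pos : 0 < γ₁ := hγ₁ ▸ by positivity
  rw [div_le_iff₀ hγ₁pos]
  calc φ₁ ≤ (1 - α) * φ₀ + ε * α * w := h
    _ = (φ₀ / γ₀ + η * ε / α * w) * γ₁ := by
      rw [add_mul]
      congr 1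
      · rw [hγ₁']; field_simp
      · rw [hγ₁]; field_simp

theorem two_mul_div_sq_eq_two_div {α η γ : ℝ} (hα : 0 < α) (hη : 0 < η) (hγ : 0 < γ)
    (h : α ^ 2 / η = (1 - α) * γ) : 2 * η * (1 - α) / α ^ 2 = 2 / γ := by
  rw [div_eq_div_iff (by positivity) hγ.ne']
  field_simp at h
  linarith

theorem stmt_8_general {E : Type*} [NormedAddCommGroup E]
    (F : E → ℝ) (xstar : E)
    (x z : ℕ → E) (hFk : ∀ k, F xstar ≤ F (x k))
    (γ α η ε : ℕ → ℝ) (hγ0 : 0 < γ 0)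
    (hαpos : ∀ k, 0 < α k)
    (hηpos : ∀ k, 0 < η k) (hε : ∀ k, 0 ≤ ε k)
    (hγrec1 : ∀ k, γ (k + 1) = (α k) ^ 2 / η k)
    (hγrec2 : ∀ k, γ (k + 1) = (1 - α k) * γ k)
    (hstep : ∀ k : ℕ,
      F (x (k + 1)) - F xstar + γ (k + 1) / 2 * ‖xstar - z (k + 1)‖ ^ 2 ≤
        (1 - α k) * (F (x k) - F xstar + γ k / 2 * ‖xstar - z k‖ ^ 2) +
          ε k * α k * ‖xstar - z (k + 1)‖) :
    ∀ k : ℕ,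
      ‖xstar - z (k + 1)‖ ≤
        2 * ∑ t ∈ Finset.range (k + 1), η t * ε t / α t +
          Real.sqrt (2 * η 0 * (1 - α 0) / (α 0) ^ 2 *
            (F (x 0) - F xstar + γ 0 / 2 * ‖xstar - z 0‖ ^ 2)) := by
  have hγpos : ∀ k, 0 < γ k
    | 0 => hγ0
    | k + 1 => hγrec1 k ▸ div_pos (pow_pos (hαpos k) 2) (hηpos k)
  set φ : ℕ → ℝ := fun k => F (x k) - F xstar + γ k / 2 * ‖xstar - z k‖ ^ 2 with hφ
  have hdist : ∀ k, ‖xstar - z k‖ ^ 2 / 2 ≤ φ k / γ k := fun k => by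
    rw [le_div_iff₀ (hγpos k)]
    simp only [hφ]
    linarith [hFk k]
  have hdecay : ∀ k, φ (k + 1) / γ (k + 1) ≤ φ k / γ k + η k * ε k / α k * ‖xstar - z (k + 1)‖ :=
    fun k => div_le_div_add_mul_of_le_one_sub_mul_add (hγpos k) (hαpos k) (hηpos k)
      (hγrec1 k) (hγrec2 k) (hstep k)
  have hφ0 : 2 * (φ 0 / γ 0) = 2 * η 0 * (1 - α 0) / α 0 ^ 2 * φ 0 := by
    rw [two_mul_div_sq_eq_two_div (hαpos 0) (hηpos 0) hγ0 ((hγrec1 0).symm.trans (hγrec2 0))]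
    ring
  have hc : ∀ k, 0 ≤ η k * ε k / α k := fun k =>
    div_nonneg (mul_nonneg (hηpos k).le (hε k)) (hαpos k).le
  intro k
  simpa only [hφ0] using le_two_mul_sum_add_sqrt hc hdist hdecay k

/-- Bound on the iterate distances of the inexact APG method in the merely convex case:
with `φ_k = F(x^k) − F* + (γ_k/2)‖x* − z^k‖²`, `γ_{k+1} = α_k²/η_k = (1−α_k)γ_k` and
`φ_{k+1} ≤ (1−α_k)φ_k + ε_k α_k ‖x* − z^{k+1}‖`, one has
`‖x* − z^{k+1}‖ ≤ 2 Σ_{t≤k} η_t ε_t/α_t + √((2η₀(1−α₀)/α₀²) φ₀)`. -/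
theorem stmt_8 {E : Type*} [NormedAddCommGroup E]
    (F : E → ℝ) (xstar : E) (hmin : ∀ u, F xstar ≤ F u)
    (x z : ℕ → E) (hFk : ∀ k, F xstar ≤ F (x k))
    (γ α η ε : ℕ → ℝ) (hγ0 : 0 < γ 0)
    (hαpos : ∀ k, 0 < α k) (hαlt : ∀ k, α k < 1)
    (hηpos : ∀ k, 0 < η k) (hε : ∀ k, 0 ≤ ε k)
    (hγrec1 : ∀ k, γ (k + 1) = (α k) ^ 2 / η k)
    (hγrec2 : ∀ k, γ (k + 1) = (1 - α k) * γ k)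
    (hstep : ∀ k : ℕ,
      F (x (k + 1)) - F xstar + γ (k + 1) / 2 * ‖xstar - z (k + 1)‖ ^ 2 ≤
        (1 - α k) * (F (x k) - F xstar + γ k / 2 * ‖xstar - z k‖ ^ 2) +
          ε k * α k * ‖xstar - z (k + 1)‖) :
    ∀ k : ℕ,
      ‖xstar - z (k + 1)‖ ≤
        2 * ∑ t ∈ Finset.range (k + 1), η t * ε t / α t +
          Real.sqrt (2 * η 0 * (1 - α 0) / (α 0) ^ 2 *
            (F (x 0) - F xstar + γ 0 / 2 * ‖xstar - z 0‖ ^ 2)) :=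
  stmt_8_general F xstar x z hFk γ α η ε hγ0 hαpos hηpos hε hγrec1 hγrec2 hstep
end

section
/- Let (x*, λ*) be a KKT pair of the affine-constrained problem. Let x^(k) ∈ ℝ^n, λ^(k) = [λ_E^(k); λ_I^(k)], β_k > 0, ρ_k > 0 and ε̄_k ≥ 0, and suppose x^(k+1) satisfies the ε̄_k-stationarity condition: there exists v with ‖v‖ ≤ ε̄_k such that v − A_E^⊤λ_E^(k) − β_k·A_E^⊤(A_E x^(k+1) − b_E) − A_I^⊤[β_k(A_I x^(k+1) − b_I) + λ_I^(k)]_+ − ρ_k(x^(k+1) − x^(k)) ∈ ∂G(x^(k+1)). Define λ_E^(k+1) = λ_E^(k) + β_k(A_E x^(k+1) − b_E) and λ_I^(k+1) = [λ_I^(k) + β_k(A_I x^(k+1) − b_I)]_+. Then: ε̄_k·‖x^(k+1) − x*‖ ≥ μ·‖x^(k+1) − x*‖² + (1/(2β_k))·(‖λ^(k+1) − λ*‖² + ‖λ^(k+1) − λ^(k)‖² − ‖λ^(k) − λ*‖²) + (ρ_k/2)·(‖x^(k+1) − x^(k)‖² + ‖x^(k+1) − x*‖² − ‖x^(k) − x*‖²).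 -/
/-!
Adding the strong-convexity inequalities at `x^{k+1}` (with the inexact stationarity subgradient)
and at `x*` (with the KKT subgradient) gives strong monotonicity of `∂G`:
`μ‖x^{k+1} − x*‖² ≤ ⟨ξ^{k+1} − ξ*, x^{k+1} − x*⟩`. The right-hand side splits into `⟨v, ·⟩`,
two multiplier terms and a proximal term. The proximal term and the equality multiplier term are
turned into squared norms by the three-point identity; for the inequality multipliers the same
identity gives only an inequality, because `[·]₊` is the projection onto the nonnegative orthant and
`λ_I* ≥ 0`, together with complementary slackness. Finally `⟨v, ·⟩ ≤ ε̄_k‖·‖` by Cauchy–Schwarz.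
-/

open scoped RealInnerProductSpace

/-- Componentwise positive part `[v]₊` of a Euclidean vector. -/
noncomputable def posPart {m : ℕ} (v : EuclideanSpace ℝ (Fin m)) : EuclideanSpace ℝ (Fin m) :=
  WithLp.toLp 2 (fun i => max (v i) 0)

/-- The subdifferential `∂G(x) = {ξ | ∀ u, G(u) ≥ G(x) + ⟨ξ, u − x⟩}`. -/
def subderiv {E : Type*} [NormedAddCommGroup E] [InnerProductSpace ℝ E]
    (G : E → ℝ) (x : E) : Set E :=
  {ξ | ∀ u, G x + ⟪ξ, u - x⟫ ≤ G u}

section InnerProductSpace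

variable {E : Type*} [NormedAddCommGroup E] [InnerProductSpace ℝ E]

lemma two_mul_real_inner_sub_sub (a b c : E) :
    2 * ⟪a - c, a - b⟫ = ‖a - c‖ ^ 2 + ‖a - b‖ ^ 2 - ‖b - c‖ ^ 2 := by
  have h : ‖b - c‖ ^ 2 = ‖a - c‖ ^ 2 - 2 * ⟪a - c, a - b⟫ + ‖a - b‖ ^ 2 := by
    rw [show b - c = (a - c) - (a - b) by abel]
    exact norm_sub_sq_real _ _
  linarith

lemma mul_norm_sub_sq_le_inner_of_mem_subderiv {G : E → ℝ} {μ : ℝ}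
    (hG : ∀ x u ξ : E, ξ ∈ subderiv G x → G x + ⟪ξ, u - x⟫ + μ / 2 * ‖u - x‖ ^ 2 ≤ G u)
    {x y ξ η : E} (hξ : ξ ∈ subderiv G x) (hη : η ∈ subderiv G y) :
    μ * ‖x - y‖ ^ 2 ≤ ⟪ξ - η, x - y⟫ := by
  have hx := hG x y ξ hξ
  have hy := hG y x η hη
  rw [show y - x = -(x - y) by abel, inner_neg_right, norm_neg] at hx
  rw [inner_sub_left]
  linarith

lemma real_inner_multiplier_update_eq {lam lam' lamStar r : E} {β : ℝ} (hβ : 0 < β)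
    (hlam' : lam' = lam + β • r) :
    1 / (2 * β) * (‖lam' - lamStar‖ ^ 2 + ‖lam' - lam‖ ^ 2 - ‖lam - lamStar‖ ^ 2) =
      ⟪lam' - lamStar, r⟫ := by
  have hstep : ⟪lam' - lamStar, lam' - lam⟫ = β * ⟪lam' - lamStar, r⟫ := by
    rw [hlam', add_sub_cancel_left, real_inner_smul_right]
  rw [← two_mul_real_inner_sub_sub, hstep]
  field_simp

end InnerProductSpace

section PosPart

variable {m : ℕ}

lemma posPart_apply_nonneg (w : EuclideanSpace ℝ (Fin m)) (i : Fin m) : 0 ≤ posPart w i :=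
  le_max_right _ _

/-- Variational inequality of the projection `[·]₊` onto the nonnegative orthant. -/
lemma real_inner_posPart_sub_nonneg (w s : EuclideanSpace ℝ (Fin m)) (hs : ∀ i, 0 ≤ s i) :
    0 ≤ ⟪posPart w - s, w - posPart w⟫ := by
  rw [PiLp.inner_apply]
  refine Finset.sum_nonneg fun i _ => ?_
  simp only [_root_.posPart, RCLike.inner_apply, conj_trivial, PiLp.sub_apply]
  rcases le_or_gt 0 (w i) with hw | hw
  · simp [max_eq_left hw]
  · rw [max_eq_right hw.le]
    nlinarith [hs i]

lemma multiplier_posPart_update_le {lam lam' lamStar r s : EuclideanSpace ℝ (Fin m)} {β : ℝ}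
    (hβ : 0 < β) (hlam' : lam' = posPart (lam + β • r)) (hs : ∀ i, s i ≤ 0)
    (hlamStar : ∀ i, 0 ≤ lamStar i) (hcompl : ⟪lamStar, s⟫ = 0) :
    1 / (2 * β) * (‖lam' - lamStar‖ ^ 2 + ‖lam' - lam‖ ^ 2 - ‖lam - lamStar‖ ^ 2) ≤
      ⟪lam' - lamStar, r - s⟫ := by
  have hproj : 0 ≤ ⟪lam' - lamStar, (lam + β • r) - lam'⟫ := by
    rw [hlam']; exact real_inner_posPart_sub_nonneg _ _ hlamStar
  have hstep : β * ⟪lam' - lamStar, r⟫ =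
      ⟪lam' - lamStar, lam' - lam⟫ + ⟪lam' - lamStar, (lam + β • r) - lam'⟫ := by
    rw [← inner_add_right, ← real_inner_smul_right]
    congr 1
    abel
  have hslack : ⟪lam', s⟫ ≤ 0 := by
    rw [PiLp.inner_apply]
    refine Finset.sum_nonpos fun i _ => ?_
    simp only [RCLike.inner_apply, conj_trivial]
    exact mul_nonpos_of_nonpos_of_nonneg (hs i) (hlam' ▸ posPart_apply_nonneg _ i)
  have h3 := two_mul_real_inner_sub_sub lam' lam lamStar
  rw [inner_sub_right, inner_sub_left _ _ s, hcompl, one_div_mul_eq_div,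
    div_le_iff₀ (by positivity)]
  linarith [mul_nonpos_of_nonpos_of_nonneg hslack hβ.le]

end PosPart

lemma real_inner_stationarity_sub_kkt {E F F' : Type*}
    [NormedAddCommGroup E] [InnerProductSpace ℝ E] [CompleteSpace E]
    [NormedAddCommGroup F] [InnerProductSpace ℝ F] [CompleteSpace F]
    [NormedAddCommGroup F'] [InnerProductSpace ℝ F'] [CompleteSpace F']
    (AE : E →L[ℝ] F) (AI : E →L[ℝ] F') (v d y : E) (lamE lamEstar rE : F)
    (lamI' lamIstar : F') (β ρ : ℝ) :
    ⟪v - ContinuousLinearMap.adjoint AE lamE - β • ContinuousLinearMap.adjoint AE rE -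
        ContinuousLinearMap.adjoint AI lamI' - ρ • d -
        -(ContinuousLinearMap.adjoint AE lamEstar + ContinuousLinearMap.adjoint AI lamIstar), y⟫ =
      ⟪v, y⟫ - ⟪lamE + β • rE - lamEstar, AE y⟫ - ⟪lamI' - lamIstar, AI y⟫ - ρ * ⟪d, y⟫ := by
  simp only [inner_sub_left, inner_add_left, inner_neg_left, real_inner_smul_left,
    ContinuousLinearMap.adjoint_inner_left]
  ring

theorem stmt_13_general {n mE mI : ℕ}
    (G : EuclideanSpace ℝ (Fin n) → ℝ) (μ : ℝ)
    (hGsc : ∀ (xx u ξ : EuclideanSpace ℝ (Fin n)), ξ ∈ subderiv G xx →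
      G xx + ⟪ξ, u - xx⟫ + μ / 2 * ‖u - xx‖ ^ 2 ≤ G u)
    (AE : EuclideanSpace ℝ (Fin n) →L[ℝ] EuclideanSpace ℝ (Fin mE))
    (AI : EuclideanSpace ℝ (Fin n) →L[ℝ] EuclideanSpace ℝ (Fin mI))
    (bE : EuclideanSpace ℝ (Fin mE)) (bI : EuclideanSpace ℝ (Fin mI))
    (xstar : EuclideanSpace ℝ (Fin n))
    (lamEstar : EuclideanSpace ℝ (Fin mE)) (lamIstar : EuclideanSpace ℝ (Fin mI))
    (hkkt1 : -(ContinuousLinearMap.adjoint AE lamEstar +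
        ContinuousLinearMap.adjoint AI lamIstar) ∈ subderiv G xstar)
    (hkkt2 : AE xstar = bE) (hkkt3 : ∀ i, AI xstar i ≤ bI i)
    (hkkt4 : ∀ i, 0 ≤ lamIstar i)
    (hkkt5 : ⟪lamIstar, AI xstar - bI⟫ = 0)
    (xk xk1 : EuclideanSpace ℝ (Fin n))
    (lamE : EuclideanSpace ℝ (Fin mE)) (lamI : EuclideanSpace ℝ (Fin mI))
    (βk ρk εk : ℝ) (hβ : 0 < βk)
    (v : EuclideanSpace ℝ (Fin n)) (hv : ‖v‖ ≤ εk)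
    (hstat : v - ContinuousLinearMap.adjoint AE lamE -
        βk • ContinuousLinearMap.adjoint AE (AE xk1 - bE) -
        ContinuousLinearMap.adjoint AI (posPart (βk • (AI xk1 - bI) + lamI)) -
        ρk • (xk1 - xk) ∈ subderiv G xk1)
    (lamE1 : EuclideanSpace ℝ (Fin mE)) (lamI1 : EuclideanSpace ℝ (Fin mI))
    (hlamE1 : lamE1 = lamE + βk • (AE xk1 - bE))
    (hlamI1 : lamI1 = posPart (lamI + βk • (AI xk1 - bI))) :
    μ * ‖xk1 - xstar‖ ^ 2 +
        1 / (2 * βk) * ((‖lamE1 - lamEstar‖ ^ 2 + ‖lamI1 - lamIstar‖ ^ 2) +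
          (‖lamE1 - lamE‖ ^ 2 + ‖lamI1 - lamI‖ ^ 2) -
          (‖lamE - lamEstar‖ ^ 2 + ‖lamI - lamIstar‖ ^ 2)) +
        ρk / 2 * (‖xk1 - xk‖ ^ 2 + ‖xk1 - xstar‖ ^ 2 - ‖xk - xstar‖ ^ 2) ≤
      εk * ‖xk1 - xstar‖ := by
  have hmono := mul_norm_sub_sq_le_inner_of_mem_subderiv hGsc hstat hkkt1
  rw [add_comm _ lamI, ← hlamI1, real_inner_stationarity_sub_kkt, ← hlamE1, map_sub,
    map_sub, hkkt2] at hmono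
  have hE := real_inner_multiplier_update_eq (lamStar := lamEstar) hβ hlamE1
  have hI := multiplier_posPart_update_le hβ hlamI1 (fun i => sub_nonpos.mpr (hkkt3 i)) hkkt4 hkkt5
  rw [sub_sub_sub_cancel_right] at hI
  have hprox : ρk * ⟪xk1 - xk, xk1 - xstar⟫ =
      ρk / 2 * (‖xk1 - xk‖ ^ 2 + ‖xk1 - xstar‖ ^ 2 - ‖xk - xstar‖ ^ 2) := by
    have h := two_mul_real_inner_sub_sub xk1 xstar xk
    rw [norm_sub_rev xstar] at h
    linear_combination ρk / 2 * h
  have hv' : ⟪v, xk1 - xstar⟫ ≤ εk * ‖xk1 - xstar‖ :=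
    (real_inner_le_norm _ _).trans (mul_le_mul_of_nonneg_right hv (norm_nonneg _))
  linarith

/-- One-step inequality of the inexact proximal augmented Lagrangian method (iPALM)
for `min G(x) s.t. A_E x = b_E, A_I x ≤ b_I` with `G` `μ`-strongly convex:
`ε̄_k ‖x^{k+1} − x*‖ ≥ μ‖x^{k+1} − x*‖² + (1/(2β_k))(‖λ^{k+1} − λ*‖² + ‖λ^{k+1} − λ^k‖²
  − ‖λ^k − λ*‖²) + (ρ_k/2)(‖x^{k+1} − x^k‖² + ‖x^{k+1} − x*‖² − ‖x^k − x*‖²)`. -/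
theorem stmt_13 {n mE mI : ℕ}
    (G : EuclideanSpace ℝ (Fin n) → ℝ) (μ : ℝ) (hμ : 0 ≤ μ)
    (hGconv : ConvexOn ℝ Set.univ G)
    (hGsc : ∀ (xx u ξ : EuclideanSpace ℝ (Fin n)), ξ ∈ subderiv G xx →
      G xx + ⟪ξ, u - xx⟫ + μ / 2 * ‖u - xx‖ ^ 2 ≤ G u)
    (AE : EuclideanSpace ℝ (Fin n) →L[ℝ] EuclideanSpace ℝ (Fin mE))
    (AI : EuclideanSpace ℝ (Fin n) →L[ℝ] EuclideanSpace ℝ (Fin mI))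
    (bE : EuclideanSpace ℝ (Fin mE)) (bI : EuclideanSpace ℝ (Fin mI))
    (xstar : EuclideanSpace ℝ (Fin n))
    (lamEstar : EuclideanSpace ℝ (Fin mE)) (lamIstar : EuclideanSpace ℝ (Fin mI))
    (hkkt1 : -(ContinuousLinearMap.adjoint AE lamEstar +
        ContinuousLinearMap.adjoint AI lamIstar) ∈ subderiv G xstar)
    (hkkt2 : AE xstar = bE) (hkkt3 : ∀ i, AI xstar i ≤ bI i)
    (hkkt4 : ∀ i, 0 ≤ lamIstar i)
    (hkkt5 : ⟪lamIstar, AI xstar - bI⟫ = 0)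
    (xk xk1 : EuclideanSpace ℝ (Fin n))
    (lamE : EuclideanSpace ℝ (Fin mE)) (lamI : EuclideanSpace ℝ (Fin mI))
    (βk ρk εk : ℝ) (hβ : 0 < βk) (hρ : 0 < ρk) (hε : 0 ≤ εk)
    (v : EuclideanSpace ℝ (Fin n)) (hv : ‖v‖ ≤ εk)
    (hstat : v - ContinuousLinearMap.adjoint AE lamE -
        βk • ContinuousLinearMap.adjoint AE (AE xk1 - bE) -
        ContinuousLinearMap.adjoint AI (posPart (βk • (AI xk1 - bI) + lamI)) -
        ρk • (xk1 - xk) ∈ subderiv G xk1)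
    (lamE1 : EuclideanSpace ℝ (Fin mE)) (lamI1 : EuclideanSpace ℝ (Fin mI))
    (hlamE1 : lamE1 = lamE + βk • (AE xk1 - bE))
    (hlamI1 : lamI1 = posPart (lamI + βk • (AI xk1 - bI))) :
    μ * ‖xk1 - xstar‖ ^ 2 +
        1 / (2 * βk) * ((‖lamE1 - lamEstar‖ ^ 2 + ‖lamI1 - lamIstar‖ ^ 2) +
          (‖lamE1 - lamE‖ ^ 2 + ‖lamI1 - lamI‖ ^ 2) -
          (‖lamE - lamEstar‖ ^ 2 + ‖lamI - lamIstar‖ ^ 2)) +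
        ρk / 2 * (‖xk1 - xk‖ ^ 2 + ‖xk1 - xstar‖ ^ 2 - ‖xk - xstar‖ ^ 2) ≤
      εk * ‖xk1 - xstar‖ :=
  stmt_13_general G μ hGsc AE AI bE bI xstar lamEstar lamIstar hkkt1 hkkt2 hkkt3 hkkt4 hkkt5 xk xk1
    lamE lamI βk ρk εk hβ v hv hstat lamE1 lamI1 hlamE1 hlamI1
end

section
/- Let (x*, λ*) be a KKT pair of the affine-constrained problem, let β_0 > 0, ρ_0 > 0 and σ > 1, and set β_k = β_0·σ^k and ρ_k = ρ_0·σ^{−k} for k ≥ 0. Suppose the sequences (x^(k)), (λ^(k)) and tolerances ε̄_k ≥ 0 satisfy, for every k ≥ 0, the iPALM one-step inequality: ε̄_k·‖x^(k+1) − x*‖ ≥ μ·‖x^(k+1) − x*‖² + (1/(2β_k))·(‖λ^(k+1) − λ*‖² + ‖λ^(k+1) − λ^(k)‖² − ‖λ^(k) − λ*‖²) + (ρ_k/2)·(‖x^(k+1) − x^(k)‖² + ‖x^(k+1) − x*‖² − ‖x^(k) − x*‖²), with μ ≥ 0. Then for every k ≥ 0: √(β_0ρ_0·‖x^(k+1)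 − x*‖² + ‖λ^(k+1) − λ*‖²) ≤ Σ_{i=0}^{k} (2β_i·ε̄_i)/√(β_0ρ_0) + √(β_0ρ_0·‖x^(0) − x*‖² + ‖λ^(0) − λ*‖²). -/
/-!
Multiplying the one-step inequality by `2β_k` and using `β_k ρ_k = β₀ρ₀` shows that the energy
`V_k = β₀ρ₀‖x^k − x*‖² + ‖λ^k − λ*‖²` satisfies `V_{k+1} ≤ V_k + 2β_k ε̄_k ‖x^{k+1} − x*‖`, once the
nonnegative terms `μ‖x^{k+1} − x*‖²`, `‖λ^{k+1} − λ^k‖²` and `‖x^{k+1} − x^k‖²` are dropped. Since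
`‖x^{k+1} − x*‖ ≤ √V_{k+1} / √(β₀ρ₀)`, this is a quadratic inequality in `√V_{k+1}` which gives
`√V_{k+1} ≤ √V_k + 2β_k ε̄_k / √(β₀ρ₀)`; summing these increments proves the bound.
-/

open Finset

lemma le_add_of_sq_le_sq_add_mul {s t c : ℝ} (ht : 0 ≤ t) (hc : 0 ≤ c)
    (h : s ^ 2 ≤ t ^ 2 + c * s) : s ≤ t + c := by
  nlinarith

lemma sqrt_le_sqrt_add_of_le_add_mul_sqrt {a b c : ℝ} (ha : 0 ≤ a) (hb : 0 ≤ b) (hc : 0 ≤ c)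
    (h : b ≤ a + c * √b) : √b ≤ √a + c := by
  refine le_add_of_sq_le_sq_add_mul (Real.sqrt_nonneg a) hc ?_
  rwa [Real.sq_sqrt ha, Real.sq_sqrt hb]

lemma le_sqrt_mul_sq_add_div_sqrt {t c s : ℝ} (ht : 0 ≤ t) (hc : 0 < c) (hs : 0 ≤ s) :
    t ≤ √(c * t ^ 2 + s) / √c := by
  rw [le_div_iff₀ (Real.sqrt_pos.mpr hc), mul_comm, ← Real.sqrt_sq ht, ← Real.sqrt_mul hc.le,
    Real.sqrt_sq ht]
  exact Real.sqrt_le_sqrt (le_add_of_nonneg_right hs)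

lemma le_sum_range_add_of_succ_le_add {α : Type*} [AddCommGroup α] [PartialOrder α]
    [IsOrderedAddMonoid α] {u d : ℕ → α} (h : ∀ n, u (n + 1) ≤ u n + d n) (k : ℕ) :
    u k ≤ ∑ i ∈ range k, d i + u 0 := by
  have hsum : ∑ i ∈ range k, (u (i + 1) - u i) ≤ ∑ i ∈ range k, d i :=
    sum_le_sum fun i _ ↦ sub_le_iff_le_add'.mpr (h i)
  rw [sum_range_sub] at hsum
  exact sub_le_iff_le_add.mp hsum

section OneStep

variable {E F : Type*} [NormedAddCommGroup E] [NormedAddCommGroup F]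
  {xstar x x' : E} {lamstar lam lam' : F} {β ρ μ ε : ℝ}

lemma energy_le_of_one_step (hβ : 0 < β) (hρ : 0 ≤ ρ) (hμ : 0 ≤ μ)
    (hstep : μ * ‖x' - xstar‖ ^ 2 +
        1 / (2 * β) * (‖lam' - lamstar‖ ^ 2 + ‖lam' - lam‖ ^ 2 - ‖lam - lamstar‖ ^ 2) +
        ρ / 2 * (‖x' - x‖ ^ 2 + ‖x' - xstar‖ ^ 2 - ‖x - xstar‖ ^ 2) ≤
      ε * ‖x' - xstar‖) :
    β * ρ * ‖x' - xstar‖ ^ 2 + ‖lam' - lamstar‖ ^ 2 ≤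
      β * ρ * ‖x - xstar‖ ^ 2 + ‖lam - lamstar‖ ^ 2 + 2 * β * ε * ‖x' - xstar‖ := by
  have hscaled := mul_le_mul_of_nonneg_left hstep (by positivity : (0 : ℝ) ≤ 2 * β)
  have hexpand : 2 * β * (μ * ‖x' - xstar‖ ^ 2 +
        1 / (2 * β) * (‖lam' - lamstar‖ ^ 2 + ‖lam' - lam‖ ^ 2 - ‖lam - lamstar‖ ^ 2) +
        ρ / 2 * (‖x' - x‖ ^ 2 + ‖x' - xstar‖ ^ 2 - ‖x - xstar‖ ^ 2)) =
      2 * β * μ * ‖x' - xstar‖ ^ 2 +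
        (‖lam' - lamstar‖ ^ 2 + ‖lam' - lam‖ ^ 2 - ‖lam - lamstar‖ ^ 2) +
        β * ρ * (‖x' - x‖ ^ 2 + ‖x' - xstar‖ ^ 2 - ‖x - xstar‖ ^ 2) := by
    field_simp
  have hμterm : 0 ≤ 2 * β * μ * ‖x' - xstar‖ ^ 2 := by positivity
  have hxterm : 0 ≤ β * ρ * ‖x' - x‖ ^ 2 := by positivity
  nlinarith [sq_nonneg ‖lam' - lam‖]

lemma sqrt_energy_le_of_one_step (hβ : 0 < β) (hρ : 0 < ρ) (hμ : 0 ≤ μ) (hε : 0 ≤ ε)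
    (hstep : μ * ‖x' - xstar‖ ^ 2 +
        1 / (2 * β) * (‖lam' - lamstar‖ ^ 2 + ‖lam' - lam‖ ^ 2 - ‖lam - lamstar‖ ^ 2) +
        ρ / 2 * (‖x' - x‖ ^ 2 + ‖x' - xstar‖ ^ 2 - ‖x - xstar‖ ^ 2) ≤
      ε * ‖x' - xstar‖) :
    √(β * ρ * ‖x' - xstar‖ ^ 2 + ‖lam' - lamstar‖ ^ 2) ≤
      √(β * ρ * ‖x - xstar‖ ^ 2 + ‖lam - lamstar‖ ^ 2) + 2 * β * ε / √(β * ρ) := by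
  have hβρ : 0 < β * ρ := mul_pos hβ hρ
  have hx' := le_sqrt_mul_sq_add_div_sqrt (norm_nonneg (x' - xstar)) hβρ
    (sq_nonneg ‖lam' - lamstar‖)
  refine sqrt_le_sqrt_add_of_le_add_mul_sqrt (by positivity) (by positivity) (by positivity) ?_
  calc β * ρ * ‖x' - xstar‖ ^ 2 + ‖lam' - lamstar‖ ^ 2
      ≤ β * ρ * ‖x - xstar‖ ^ 2 + ‖lam - lamstar‖ ^ 2 + 2 * β * ε * ‖x' - xstar‖ :=
        energy_le_of_one_step hβ hρ.le hμ hstep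
    _ ≤ β * ρ * ‖x - xstar‖ ^ 2 + ‖lam - lamstar‖ ^ 2 +
          2 * β * ε * (√(β * ρ * ‖x' - xstar‖ ^ 2 + ‖lam' - lamstar‖ ^ 2) / √(β * ρ)) := by
        gcongr
    _ = β * ρ * ‖x - xstar‖ ^ 2 + ‖lam - lamstar‖ ^ 2 +
          2 * β * ε / √(β * ρ) * √(β * ρ * ‖x' - xstar‖ ^ 2 + ‖lam' - lamstar‖ ^ 2) := by
        ring

end OneStep

/-- Uniform boundedness of the primal-dual iterates of iPALM: with `β_k = β₀σ^k`,
`ρ_k = ρ₀σ^{−k}` and the one-step inequality, one has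
`√(β₀ρ₀‖x^{k+1} − x*‖² + ‖λ^{k+1} − λ*‖²) ≤ Σ_{i≤k} 2β_i ε̄_i/√(β₀ρ₀)
  + √(β₀ρ₀‖x⁰ − x*‖² + ‖λ⁰ − λ*‖²)`. -/
theorem stmt_14 {E F : Type*} [NormedAddCommGroup E] [NormedAddCommGroup F]
    (xstar : E) (lamstar : F) (x : ℕ → E) (lam : ℕ → F)
    (β0 ρ0 σ μ : ℝ) (hβ0 : 0 < β0) (hρ0 : 0 < ρ0) (hσ : 1 < σ) (hμ : 0 ≤ μ)
    (εb : ℕ → ℝ) (hεb : ∀ k, 0 ≤ εb k)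
    (hstep : ∀ k : ℕ,
      μ * ‖x (k + 1) - xstar‖ ^ 2 +
          1 / (2 * (β0 * σ ^ k)) * (‖lam (k + 1) - lamstar‖ ^ 2 +
            ‖lam (k + 1) - lam k‖ ^ 2 - ‖lam k - lamstar‖ ^ 2) +
          (ρ0 / σ ^ k) / 2 * (‖x (k + 1) - x k‖ ^ 2 + ‖x (k + 1) - xstar‖ ^ 2 -
            ‖x k - xstar‖ ^ 2) ≤
        εb k * ‖x (k + 1) - xstar‖) :
    ∀ k : ℕ,
      Real.sqrt (β0 * ρ0 * ‖x (k + 1) - xstar‖ ^ 2 + ‖lam (k + 1) - lamstar‖ ^ 2) ≤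
        ∑ i ∈ Finset.range (k + 1), 2 * (β0 * σ ^ i) * εb i / Real.sqrt (β0 * ρ0) +
          Real.sqrt (β0 * ρ0 * ‖x 0 - xstar‖ ^ 2 + ‖lam 0 - lamstar‖ ^ 2) := by
  have hσpow (k : ℕ) : 0 < σ ^ k := pow_pos (zero_lt_one.trans hσ) k
  have hβρ (k : ℕ) : β0 * σ ^ k * (ρ0 / σ ^ k) = β0 * ρ0 := by
    field_simp [(hσpow k).ne']
  have hincr (k : ℕ) :
      √(β0 * ρ0 * ‖x (k + 1) - xstar‖ ^ 2 + ‖lam (k + 1) - lamstar‖ ^ 2) ≤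
        √(β0 * ρ0 * ‖x k - xstar‖ ^ 2 + ‖lam k - lamstar‖ ^ 2) +
          2 * (β0 * σ ^ k) * εb k / √(β0 * ρ0) := by
    simpa only [hβρ] using sqrt_energy_le_of_one_step (mul_pos hβ0 (hσpow k))
      (div_pos hρ0 (hσpow k)) hμ (hεb k) (hstep k)
  exact fun k ↦ le_sum_range_add_of_succ_le_add
    (u := fun n ↦ √(β0 * ρ0 * ‖x n - xstar‖ ^ 2 + ‖lam n - lamstar‖ ^ 2)) hincr (k + 1)
end

section
/- Let β > 0, ρ ≥ 0, ε̄ ≥ 0, and suppose λ_E^(k) = λ_E^(k−1) + β(A_E x^(k) − b_E) and λ_I^(k) = [λ_I^(k−1) + β(A_I x^(k) − b_I)]_+ with λ_I^(k−1) ≥ 0 componentwise, and that there exists v with ‖v‖ ≤ ε̄ such that v − A_E^⊤λ_E^(k−1) − β·A_E^⊤(A_E x^(k) − b_E) − A_I^⊤[β(A_I x^(k) − b_I) + λ_I^(k−1)]_+ − ρ(x^(k) − x^(k−1)) ∈ ∂G(x^(k)). Then: (i) dist(0, ∂G(x^(k)) + A^⊤λ^(k)) ≤ ε̄ + ρ·‖x^(k)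 − x^(k−1)‖, and (ii) √(‖A_E x^(k) − b_E‖² + ‖[A_I x^(k) − b_I]_+‖²) ≤ (1/β)·‖λ^(k) − λ^(k−1)‖. -/
open scoped RealInnerProductSpace

/- (i) The stationarity condition says that `v - ρ (x^k - x^{k-1})` lies in
`∂G(x^k) + A^⊤λ^k` once the multiplier updates are substituted, so the distance is at most its
norm. (ii) The equality block gives `λ_E^k - λ_E^{k-1} = β (A_E x^k - b_E)`, and since
`λ_I^{k-1} ≥ 0`, each component of `λ_I^k - λ_I^{k-1}` is at least `β [A_I x^k - b_I]₊` in
absolute value. -/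

theorem abs_max_zero_le_abs_max_add_zero_sub {a : ℝ} (ha : 0 ≤ a) (s : ℝ) :
    |max s 0| ≤ |max (a + s) 0 - a| := by
  rcases le_or_gt s 0 with hs | hs
  · simp [max_eq_right hs]
  · rw [max_eq_left hs.le, max_eq_left (by linarith), add_sub_cancel_left]

theorem EuclideanSpace.norm_le_norm_of_forall_abs_le {ι : Type*} [Fintype ι]
    {y z : EuclideanSpace ℝ ι} (h : ∀ i, |z i| ≤ |y i|) : ‖z‖ ≤ ‖y‖ := by
  simp only [EuclideanSpace.norm_eq, Real.norm_eq_abs]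
  exact Real.sqrt_le_sqrt (Finset.sum_le_sum fun i _ => pow_le_pow_left₀ (abs_nonneg _) (h i) 2)

theorem posPart_smul {m : ℕ} {β : ℝ} (hβ : 0 ≤ β) (v : EuclideanSpace ℝ (Fin m)) :
    posPart (β • v) = β • posPart v := by
  ext i
  simp [_root_.posPart, mul_max_of_nonneg _ _ hβ]

theorem norm_posPart_le_norm_posPart_add_sub {m : ℕ} {a : EuclideanSpace ℝ (Fin m)}
    (ha : ∀ i, 0 ≤ a i) (s : EuclideanSpace ℝ (Fin m)) :
    ‖posPart s‖ ≤ ‖posPart (a + s) - a‖ :=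
  EuclideanSpace.norm_le_norm_of_forall_abs_le fun i => by
    simpa [_root_.posPart] using abs_max_zero_le_abs_max_add_zero_sub (ha i) (s i)

theorem sqrt_sq_add_sq_le_one_div_mul {β x y X Y : ℝ} (hβ : 0 < β) (hx : 0 ≤ x) (hy : 0 ≤ y)
    (hX : β * x ≤ X) (hY : β * y ≤ Y) :
    Real.sqrt (x ^ 2 + y ^ 2) ≤ 1 / β * Real.sqrt (X ^ 2 + Y ^ 2) := by
  rw [one_div, inv_mul_eq_div, le_div_iff₀ hβ, mul_comm,
    ← Real.sqrt_sq hβ.le, ← Real.sqrt_mul (sq_nonneg β)]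
  gcongr Real.sqrt ?_
  rw [mul_add, ← mul_pow, ← mul_pow]
  gcongr

theorem stmt_15_general {n mE mI : ℕ}
    (G : EuclideanSpace ℝ (Fin n) → ℝ)
    (AE : EuclideanSpace ℝ (Fin n) →L[ℝ] EuclideanSpace ℝ (Fin mE))
    (AI : EuclideanSpace ℝ (Fin n) →L[ℝ] EuclideanSpace ℝ (Fin mI))
    (bE : EuclideanSpace ℝ (Fin mE)) (bI : EuclideanSpace ℝ (Fin mI))
    (β ρ εb : ℝ) (hβ : 0 < β) (hρ : 0 ≤ ρ)
    (xprev xk : EuclideanSpace ℝ (Fin n))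
    (lamE0 lamE1 : EuclideanSpace ℝ (Fin mE)) (lamI0 lamI1 : EuclideanSpace ℝ (Fin mI))
    (hlamI0 : ∀ i, 0 ≤ lamI0 i)
    (hlamE1 : lamE1 = lamE0 + β • (AE xk - bE))
    (hlamI1 : lamI1 = posPart (lamI0 + β • (AI xk - bI)))
    (v : EuclideanSpace ℝ (Fin n)) (hv : ‖v‖ ≤ εb)
    (hstat : v - ContinuousLinearMap.adjoint AE lamE0 -
        β • ContinuousLinearMap.adjoint AE (AE xk - bE) -
        ContinuousLinearMap.adjoint AI (posPart (β • (AI xk - bI) + lamI0)) -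
        ρ • (xk - xprev) ∈ subderiv G xk) :
    Metric.infDist 0 {w : EuclideanSpace ℝ (Fin n) | ∃ ξ ∈ subderiv G xk,
        w = ξ + ContinuousLinearMap.adjoint AE lamE1 +
          ContinuousLinearMap.adjoint AI lamI1} ≤ εb + ρ * ‖xk - xprev‖ ∧
    Real.sqrt (‖AE xk - bE‖ ^ 2 + ‖posPart (AI xk - bI)‖ ^ 2) ≤
      1 / β * Real.sqrt (‖lamE1 - lamE0‖ ^ 2 + ‖lamI1 - lamI0‖ ^ 2) := by
  constructor
  · have hmem : ∃ ξ ∈ subderiv G xk, v - ρ • (xk - xprev) =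
        ξ + ContinuousLinearMap.adjoint AE lamE1 + ContinuousLinearMap.adjoint AI lamI1 := by
      refine ⟨_, hstat, ?_⟩
      rw [hlamE1, hlamI1, add_comm lamI0, map_add, map_smul]
      abel
    calc Metric.infDist 0 _ ≤ dist 0 (v - ρ • (xk - xprev)) := Metric.infDist_le_dist_of_mem hmem
      _ = ‖v - ρ • (xk - xprev)‖ := dist_zero_left _
      _ ≤ ‖v‖ + ‖ρ • (xk - xprev)‖ := norm_sub_le _ _
      _ ≤ εb + ρ * ‖xk - xprev‖ := by rw [norm_smul, Real.norm_of_nonneg hρ]; linarith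
  · have hE : β * ‖AE xk - bE‖ ≤ ‖lamE1 - lamE0‖ := by
      rw [hlamE1, add_sub_cancel_left, norm_smul, Real.norm_of_nonneg hβ.le]
    have hI : β * ‖posPart (AI xk - bI)‖ ≤ ‖lamI1 - lamI0‖ := by
      have h := norm_posPart_le_norm_posPart_add_sub hlamI0 (β • (AI xk - bI))
      rwa [posPart_smul hβ.le, norm_smul, Real.norm_of_nonneg hβ.le, ← hlamI1] at h
    exact sqrt_sq_add_sq_le_one_div_mul hβ (norm_nonneg _) (norm_nonneg _) hE hI

/-- Dual-feasibility and primal-feasibility certification inequalities of iPALM: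
(i) `dist(0, ∂G(x^k) + A^⊤λ^k) ≤ ε̄ + ρ‖x^k − x^{k−1}‖`, and
(ii) `√(‖A_E x^k − b_E‖² + ‖[A_I x^k − b_I]₊‖²) ≤ (1/β)‖λ^k − λ^{k−1}‖`. -/
theorem stmt_15 {n mE mI : ℕ}
    (G : EuclideanSpace ℝ (Fin n) → ℝ) (hGconv : ConvexOn ℝ Set.univ G)
    (AE : EuclideanSpace ℝ (Fin n) →L[ℝ] EuclideanSpace ℝ (Fin mE))
    (AI : EuclideanSpace ℝ (Fin n) →L[ℝ] EuclideanSpace ℝ (Fin mI))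
    (bE : EuclideanSpace ℝ (Fin mE)) (bI : EuclideanSpace ℝ (Fin mI))
    (β ρ εb : ℝ) (hβ : 0 < β) (hρ : 0 ≤ ρ) (hεb : 0 ≤ εb)
    (xprev xk : EuclideanSpace ℝ (Fin n))
    (lamE0 lamE1 : EuclideanSpace ℝ (Fin mE)) (lamI0 lamI1 : EuclideanSpace ℝ (Fin mI))
    (hlamI0 : ∀ i, 0 ≤ lamI0 i)
    (hlamE1 : lamE1 = lamE0 + β • (AE xk - bE))
    (hlamI1 : lamI1 = posPart (lamI0 + β • (AI xk - bI)))
    (v : EuclideanSpace ℝ (Fin n)) (hv : ‖v‖ ≤ εb)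
    (hstat : v - ContinuousLinearMap.adjoint AE lamE0 -
        β • ContinuousLinearMap.adjoint AE (AE xk - bE) -
        ContinuousLinearMap.adjoint AI (posPart (β • (AI xk - bI) + lamI0)) -
        ρ • (xk - xprev) ∈ subderiv G xk) :
    Metric.infDist 0 {w : EuclideanSpace ℝ (Fin n) | ∃ ξ ∈ subderiv G xk,
        w = ξ + ContinuousLinearMap.adjoint AE lamE1 +
          ContinuousLinearMap.adjoint AI lamI1} ≤ εb + ρ * ‖xk - xprev‖ ∧
    Real.sqrt (‖AE xk - bE‖ ^ 2 + ‖posPart (AI xk - bI)‖ ^ 2) ≤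
      1 / β * Real.sqrt (‖lamE1 - lamE0‖ ^ 2 + ‖lamI1 - lamI0‖ ^ 2) :=
  stmt_15_general G AE AI bE bI β ρ εb hβ hρ xprev xk lamE0 lamE1 lamI0 lamI1 hlamI0 hlamE1 hlamI1 v
    hv hstat
end

section
/- Suppose f is convex, differentiable and μ-strongly convex with μ > 0, r and φ are proper closed convex, dom φ is bounded with diameter D_φ, and a saddle point (x*, y*) of the bilinear saddle-point problem exists, so that p(x*) = d(y*) = p*. If (x̄, ȳ) is an ε-saddle point for some ε ≥ 0, i.e., dist(0, ∂G(x̄) + A^⊤ȳ) ≤ ε and dist(0, A·x̄ − ∂φ(ȳ)) ≤ ε, then the duality gap satisfies p(x̄) − d(ȳ) ≤ 2ε·D_φ + 3ε²/(2μ). Moreover, p(x̄) ≤ p* + ε·D_φ + ε²/(2μ) and d(ȳ) ≥ p* − ε·D_φ − ε²/μ. -/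
open scoped RealInnerProductSpace

/-- The subdifferential of `φ` at `y` relative to the domain `Y`. -/
def subderivOn {F : Type*} [NormedAddCommGroup F] [InnerProductSpace ℝ F]
    (φ : F → ℝ) (Y : Set F) (y : F) : Set F :=
  {ζ | ∀ u ∈ Y, φ y + ⟪ζ, u - y⟫ ≤ φ u}


/-!
Write `L(x, y) = G x + ⟪y, A x⟫ - φ y`. The dual residual `ζ ∈ ∂φ(ȳ)`, `‖A x̄ - ζ‖ ≤ ε`, gives
`L(x̄, y) ≤ L(x̄, ȳ) + ε D_φ` on `dom φ`, hence `p(x̄) ≤ L(x̄, ȳ) + ε D_φ`. Since `G` is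
`μ`-strongly convex, the primal residual `ξ ∈ ∂G(x̄)`, `‖ξ + Aᵀ ȳ‖ ≤ ε`, gives the quadratic
minorant `L(w, ȳ) ≥ L(x̄, ȳ) - ε²/(2μ)`, hence `d(ȳ) ≥ L(x̄, ȳ) - ε²/(2μ)`. Comparing with
`L(x*, ȳ) ≤ p(x*)` and `d(y*) ≤ L(x̄, y*)` relates both to `p* = p(x*) = d(y*)`.
-/

open Filter Topology

section Primal

variable {E : Type*} [NormedAddCommGroup E] [InnerProductSpace ℝ E]

theorem convexOn_univ_of_subderiv_nonempty {g : E → ℝ} (hg : ∀ x, (subderiv g x).Nonempty) :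
    ConvexOn ℝ Set.univ g := by
  refine ⟨convex_univ, fun x _ y _ a b ha hb hab => ?_⟩
  obtain ⟨ξ, hξ⟩ := hg (a • x + b • y)
  have hx := hξ x
  have hy := hξ y
  have hzero : a * ⟪ξ, x - (a • x + b • y)⟫ + b * ⟪ξ, y - (a • x + b • y)⟫ = 0 := by
    rw [← real_inner_smul_right, ← real_inner_smul_right, ← inner_add_right]
    convert inner_zero_right ξ using 2
    rw [← sub_eq_iff_eq_add.mpr hab.symm]
    module
  have hsplit : a * g (a • x + b • y) + b * g (a • x + b • y) = g (a • x + b • y) := by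
    rw [← add_mul, hab, one_mul]
  simp only [smul_eq_mul]
  nlinarith [mul_le_mul_of_nonneg_left hx ha, mul_le_mul_of_nonneg_left hy hb]

theorem strongConvexOn_univ_of_add_inner_add_sq_le {f : E → ℝ} {f' : E → E} {μ : ℝ}
    (hf : ∀ u v, f v + ⟪f' v, u - v⟫ + μ / 2 * ‖u - v‖ ^ 2 ≤ f u) :
    StrongConvexOn Set.univ μ f := by
  refine strongConvexOn_iff_convex.mpr (convexOn_univ_of_subderiv_nonempty fun v =>
    ⟨f' v - μ • v, fun u => ?_⟩)
  have h := hf u v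
  rw [norm_sub_sq_real, inner_sub_right] at h
  simp only [inner_sub_left, real_inner_smul_left, inner_sub_right, real_inner_self_eq_norm_sq,
    real_inner_comm u v]
  linarith

theorem StrongConvexOn.add_convexOn {s : Set E} {μ : ℝ} {f r : E → ℝ}
    (hf : StrongConvexOn s μ f) (hr : ConvexOn ℝ s r) : StrongConvexOn s μ (f + r) := by
  rw [strongConvexOn_iff_convex] at hf ⊢
  have hsplit : (fun x => (f + r) x - μ / 2 * ‖x‖ ^ 2) = (fun x => f x - μ / 2 * ‖x‖ ^ 2) + r := by
    funext x
    simp only [Pi.add_apply]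
    ring
  exact hsplit ▸ hf.add hr

/-- Along the segment from `x` to `w` the subgradient inequality at `x` and strong convexity give
`⟪ξ, w - x⟫ + (1 - t) μ/2 ‖w - x‖² ≤ g w - g x` for `t ∈ (0, 1)`; let `t → 0`. -/
theorem StrongConvexOn.add_inner_add_sq_le {g : E → ℝ} {μ : ℝ} {x ξ : E}
    (hg : StrongConvexOn Set.univ μ g) (hξ : ξ ∈ subderiv g x) (w : E) :
    g x + ⟪ξ, w - x⟫ + μ / 2 * ‖w - x‖ ^ 2 ≤ g w := by
  have hlim : Tendsto (fun t : ℝ => (1 - t) * (μ / 2 * ‖w - x‖ ^ 2)) (𝓝[>] 0)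
      (𝓝 (μ / 2 * ‖w - x‖ ^ 2)) := by
    have h := ((tendsto_const_nhds (x := (1 : ℝ))).sub (tendsto_id (x := 𝓝 (0 : ℝ)))).mul_const
      (μ / 2 * ‖w - x‖ ^ 2)
    simpa using h.mono_left nhdsWithin_le_nhds
  suffices μ / 2 * ‖w - x‖ ^ 2 ≤ g w - g x - ⟪ξ, w - x⟫ by linarith
  refine le_of_tendsto hlim ?_
  filter_upwards [Ioo_mem_nhdsGT one_pos] with t ⟨ht0, ht1⟩
  have hsub : g x + t * ⟪ξ, w - x⟫ ≤ g ((1 - t) • x + t • w) := by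
    have h := hξ ((1 - t) • x + t • w)
    rwa [show (1 - t) • x + t • w - x = t • (w - x) by module, real_inner_smul_right] at h
  have hconv := hg.2 (Set.mem_univ x) (Set.mem_univ w) (sub_nonneg.mpr ht1.le) ht0.le
    (sub_add_cancel 1 t)
  rw [norm_sub_rev] at hconv
  simp only [smul_eq_mul] at hconv
  refine le_of_mul_le_mul_left ?_ ht0
  linarith

theorem sub_sq_norm_div_le_of_forall_le {h : E → ℝ} {μ : ℝ} (hμ : 0 < μ) {x ζ : E}
    (hh : ∀ w, h x + ⟪ζ, w - x⟫ + μ / 2 * ‖w - x‖ ^ 2 ≤ h w) (w : E) :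
    h x - ‖ζ‖ ^ 2 / (2 * μ) ≤ h w := by
  have hcs := neg_le_of_abs_le (abs_real_inner_le_norm ζ (w - x))
  have hsq : ‖ζ‖ * ‖w - x‖ - μ / 2 * ‖w - x‖ ^ 2 ≤ ‖ζ‖ ^ 2 / (2 * μ) := by
    rw [le_div_iff₀ (by positivity)]
    nlinarith [sq_nonneg (‖ζ‖ - μ * ‖w - x‖)]
  linarith [hh w]

end Primal

section Dual

variable {F : Type*} [NormedAddCommGroup F] [InnerProductSpace ℝ F]
  {φ : F → ℝ} {Y : Set F} {y₀ ζ : F}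

theorem inner_sub_le_of_mem_subderivOn (hζ : ζ ∈ subderivOn φ Y y₀) {y : F} (hy : y ∈ Y) (a : F) :
    ⟪y, a⟫ - φ y ≤ ⟪y₀, a⟫ - φ y₀ + ‖y - y₀‖ * ‖a - ζ‖ := by
  have hsplit : ⟪y - y₀, a - ζ⟫ = ⟪y, a⟫ - ⟪y₀, a⟫ - ⟪ζ, y - y₀⟫ := by
    rw [inner_sub_right, inner_sub_left, inner_sub_left, real_inner_comm ζ y,
      real_inner_comm ζ y₀, inner_sub_right]
  linarith [hζ y hy, real_inner_le_norm (y - y₀) (a - ζ)]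

theorem mem_upperBounds_image_of_mem_subderivOn {D : ℝ} (hD : ∀ y₁ ∈ Y, ∀ y₂ ∈ Y, ‖y₁ - y₂‖ ≤ D)
    (hy₀ : y₀ ∈ Y) (hζ : ζ ∈ subderivOn φ Y y₀) (a : F) :
    ⟪y₀, a⟫ - φ y₀ + D * ‖a - ζ‖ ∈ upperBounds ((fun y => ⟪y, a⟫ - φ y) '' Y) := by
  rintro _ ⟨y, hy, rfl⟩
  have hdist := mul_le_mul_of_nonneg_right (hD y hy y₀ hy₀) (norm_nonneg (a - ζ))
  linarith [inner_sub_le_of_mem_subderivOn hζ hy a]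

end Dual

theorem add_inner_apply_sub_le_of_strongConvexOn
    {E F : Type*} [NormedAddCommGroup E] [InnerProductSpace ℝ E] [CompleteSpace E]
    [NormedAddCommGroup F] [InnerProductSpace ℝ F] [CompleteSpace F]
    {g : E → ℝ} {μ : ℝ} (hμ : 0 < μ) (hg : StrongConvexOn Set.univ μ g) {x ξ : E}
    (hξ : ξ ∈ subderiv g x) (A : E →L[ℝ] F) (y : F) (w : E) :
    g x + ⟪y, A x⟫ - ‖ξ + ContinuousLinearMap.adjoint A y‖ ^ 2 / (2 * μ) ≤ g w + ⟪y, A w⟫ := by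
  refine sub_sq_norm_div_le_of_forall_le (h := fun w => g w + ⟪y, A w⟫) hμ (fun w => ?_) w
  have hadj : ⟪ContinuousLinearMap.adjoint A y, w - x⟫ = ⟪y, A w⟫ - ⟪y, A x⟫ := by
    rw [ContinuousLinearMap.adjoint_inner_left, map_sub, inner_sub_right]
  rw [inner_add_left, hadj]
  linarith [hg.add_inner_add_sq_le hξ w]

theorem stmt_17_general {n m : ℕ}
    (f r : EuclideanSpace ℝ (Fin n) → ℝ)
    (f' : EuclideanSpace ℝ (Fin n) → EuclideanSpace ℝ (Fin n)) (μ : ℝ) (hμ : 0 < μ)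
    (hf : ∀ u v : EuclideanSpace ℝ (Fin n),
      f v + ⟪f' v, u - v⟫ + μ / 2 * ‖u - v‖ ^ 2 ≤ f u)
    (hr : ConvexOn ℝ Set.univ r)
    (A : EuclideanSpace ℝ (Fin n) →L[ℝ] EuclideanSpace ℝ (Fin m))
    (Yd : Set (EuclideanSpace ℝ (Fin m)))
    (φ : EuclideanSpace ℝ (Fin m) → ℝ)
    (Dφ : ℝ) (hD : ∀ y1 ∈ Yd, ∀ y2 ∈ Yd, ‖y1 - y2‖ ≤ Dφ)
    (G : EuclideanSpace ℝ (Fin n) → ℝ) (hG : G = fun u => f u + r u)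
    (p : EuclideanSpace ℝ (Fin n) → ℝ)
    (hp : p = fun u => G u + sSup ((fun y => ⟪y, A u⟫ - φ y) '' Yd))
    (d : EuclideanSpace ℝ (Fin m) → ℝ)
    (hd : d = fun y => sInf (Set.range fun u => G u + ⟪y, A u⟫) - φ y)
    (xstar : EuclideanSpace ℝ (Fin n)) (ystar : EuclideanSpace ℝ (Fin m))
    (hystar : ystar ∈ Yd)
    (hpd : p xstar = d ystar)
    (ε : ℝ) (hε : 0 ≤ ε)
    (xbar : EuclideanSpace ℝ (Fin n)) (ybar : EuclideanSpace ℝ (Fin m)) (hybar : ybar ∈ Yd)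
    (h1 : ∃ u, ‖u‖ ≤ ε ∧ ∃ ξ ∈ subderiv G xbar,
      u = ξ + ContinuousLinearMap.adjoint A ybar)
    (h2 : ∃ v, ‖v‖ ≤ ε ∧ ∃ ζ ∈ subderivOn φ Yd ybar, v = A xbar - ζ) :
    p xbar - d ybar ≤ 2 * ε * Dφ + 3 * ε ^ 2 / (2 * μ) ∧
    p xbar ≤ p xstar + ε * Dφ + ε ^ 2 / (2 * μ) ∧
    p xstar - ε * Dφ - ε ^ 2 / μ ≤ d ybar := by
  obtain ⟨_, hu, ξ, hξ, rfl⟩ := h1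
  obtain ⟨_, hv, ζ, hζ, rfl⟩ := h2
  have hD0 : 0 ≤ Dφ := (norm_nonneg _).trans (hD ybar hybar ybar hybar)
  have hG_strong : StrongConvexOn Set.univ μ G :=
    hG ▸ (strongConvexOn_univ_of_add_inner_add_sq_le hf).add_convexOn hr
  have hlow := add_inner_apply_sub_le_of_strongConvexOn hμ hG_strong hξ A
  have hub := mem_upperBounds_image_of_mem_subderivOn hD hybar hζ
  have hsq : ‖ξ + ContinuousLinearMap.adjoint A ybar‖ ^ 2 / (2 * μ) ≤ ε ^ 2 / (2 * μ) := by
    gcongr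
  subst hp hd
  have hp_bar : sSup ((fun y => ⟪y, A xbar⟫ - φ y) '' Yd) ≤ ⟪ybar, A xbar⟫ - φ ybar + ε * Dφ :=
    csSup_le ⟨_, Set.mem_image_of_mem _ hybar⟩ fun _ hz =>
      (hub (A xbar) hz).trans (by nlinarith)
  have hp_star : ⟪ybar, A xstar⟫ - φ ybar ≤ sSup ((fun y => ⟪y, A xstar⟫ - φ y) '' Yd) :=
    le_csSup ⟨_, hub (A xstar)⟩ (Set.mem_image_of_mem _ hybar)
  have hd_bar : G xbar + ⟪ybar, A xbar⟫ - ‖ξ + ContinuousLinearMap.adjoint A ybar‖ ^ 2 / (2 * μ)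
      ≤ sInf (Set.range fun u => G u + ⟪ybar, A u⟫) :=
    le_csInf (Set.range_nonempty _) (Set.forall_mem_range.mpr (hlow ybar))
  have hd_star : sInf (Set.range fun u => G u + ⟪ystar, A u⟫) ≤ G xbar + ⟪ystar, A xbar⟫ :=
    csInf_le ⟨_, Set.forall_mem_range.mpr (hlow ystar)⟩ ⟨xbar, rfl⟩
  have hy_star := inner_sub_le_of_mem_subderivOn hζ hystar (A xbar)
  have hdist : ‖ystar - ybar‖ * ‖A xbar - ζ‖ ≤ Dφ * ε :=
    mul_le_mul (hD ystar hystar ybar hybar) hv (norm_nonneg _) hD0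
  have hx_star := hlow ybar xstar
  have hεD : 0 ≤ ε * Dφ := mul_nonneg hε hD0
  have hε2 : 0 ≤ ε ^ 2 / (2 * μ) := by positivity
  have hε2' : ε ^ 2 / μ = 2 * (ε ^ 2 / (2 * μ)) := by field_simp
  have hε3 : 3 * ε ^ 2 / (2 * μ) = 3 * (ε ^ 2 / (2 * μ)) := by ring
  beta_reduce at hpd ⊢
  refine ⟨by linarith, by linarith, by linarith⟩

/-- Duality gap of an `ε`-saddle point of the bilinear saddle-point problem:
if `(x̄, ȳ)` is an `ε`-saddle point, then `p(x̄) − d(ȳ) ≤ 2εD_φ + 3ε²/(2μ)`;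
moreover `p(x̄) ≤ p* + εD_φ + ε²/(2μ)` and `d(ȳ) ≥ p* − εD_φ − ε²/μ`. -/
theorem stmt_17 {n m : ℕ}
    (f r : EuclideanSpace ℝ (Fin n) → ℝ)
    (f' : EuclideanSpace ℝ (Fin n) → EuclideanSpace ℝ (Fin n)) (μ : ℝ) (hμ : 0 < μ)
    (hf : ∀ u v : EuclideanSpace ℝ (Fin n),
      f v + ⟪f' v, u - v⟫ + μ / 2 * ‖u - v‖ ^ 2 ≤ f u)
    (hr : ConvexOn ℝ Set.univ r)
    (A : EuclideanSpace ℝ (Fin n) →L[ℝ] EuclideanSpace ℝ (Fin m))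
    (Yd : Set (EuclideanSpace ℝ (Fin m))) (hYne : Yd.Nonempty) (hYcl : IsClosed Yd)
    (φ : EuclideanSpace ℝ (Fin m) → ℝ) (hφ : ConvexOn ℝ Yd φ)
    (hφlsc : LowerSemicontinuousOn φ Yd)
    (Dφ : ℝ) (hD : ∀ y1 ∈ Yd, ∀ y2 ∈ Yd, ‖y1 - y2‖ ≤ Dφ)
    (G : EuclideanSpace ℝ (Fin n) → ℝ) (hG : G = fun u => f u + r u)
    (p : EuclideanSpace ℝ (Fin n) → ℝ)
    (hp : p = fun u => G u + sSup ((fun y => ⟪y, A u⟫ - φ y) '' Yd))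
    (d : EuclideanSpace ℝ (Fin m) → ℝ)
    (hd : d = fun y => sInf (Set.range fun u => G u + ⟪y, A u⟫) - φ y)
    (xstar : EuclideanSpace ℝ (Fin n)) (ystar : EuclideanSpace ℝ (Fin m))
    (hystar : ystar ∈ Yd)
    (hsd1 : ∃ ξ ∈ subderiv G xstar, ξ + ContinuousLinearMap.adjoint A ystar = 0)
    (hsd2 : ∃ ζ ∈ subderivOn φ Yd ystar, A xstar - ζ = 0)
    (hpd : p xstar = d ystar)
    (ε : ℝ) (hε : 0 ≤ ε)
    (xbar : EuclideanSpace ℝ (Fin n)) (ybar : EuclideanSpace ℝ (Fin m)) (hybar : ybar ∈ Yd)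
    (h1 : ∃ u, ‖u‖ ≤ ε ∧ ∃ ξ ∈ subderiv G xbar,
      u = ξ + ContinuousLinearMap.adjoint A ybar)
    (h2 : ∃ v, ‖v‖ ≤ ε ∧ ∃ ζ ∈ subderivOn φ Yd ybar, v = A xbar - ζ) :
    p xbar - d ybar ≤ 2 * ε * Dφ + 3 * ε ^ 2 / (2 * μ) ∧
    p xbar ≤ p xstar + ε * Dφ + ε ^ 2 / (2 * μ) ∧
    p xstar - ε * Dφ - ε ^ 2 / μ ≤ d ybar :=
  stmt_17_general f r f' μ hμ hf hr A Yd φ Dφ hD G hG p hp d hd xstar ystar hystar hpd ε hε xbar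
    ybar hybar h1 h2
end

section
/- Suppose f is convex, differentiable and μ-strongly convex with μ > 0, r and φ are proper closed convex, and dom φ is bounded with diameter D_φ > 0. Given ε > 0, set ρ = ε/D_φ, fix y⁰ ∈ dom φ, and define h_ρ(x) = max_y {⟨y, A x⟩ − φ(y) − (ρ/2)‖y − y⁰‖²} (the maximum is attained at a unique point for each x, and ∇h_ρ(x) = A^⊤·argmax). Suppose x̄ satisfies dist(0, ∇f(x̄) + ∇h_ρ(x̄) + ∂r(x̄)) ≤ ε, and let ȳ be the maximizer in the definition of h_ρ(x̄). Then (x̄, ȳ) is an ε-saddle point of the original saddle-point problem: dist(0, ∂G(x̄) + A^⊤ȳ) ≤ ε and dist(0, A·x̄ − ∂φ(ȳ)) ≤ ε, where ∂G(x̄) = ∇f(x̄) + ∂r(x̄). -/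
open scoped RealInnerProductSpace

/-!
For the primal residual, `∇f(x̄) ∈ ∂f(x̄)` by strong convexity, so `∇f(x̄) + ∂r(x̄) ⊆ ∂G(x̄)` and
the distance can only decrease. For the dual residual, the optimality condition of the
`ρ`-strongly concave inner problem says `A x̄ − ρ (ȳ − y⁰) ∈ ∂φ(ȳ)`, and the corresponding element
of `A x̄ − ∂φ(ȳ)` has norm `ρ ‖ȳ − y⁰‖ ≤ ρ D_φ = ε`.
-/

open Set Filter Topology

theorem nonpos_of_forall_le_mul {X K : ℝ} (h : ∀ t ∈ Ioc (0 : ℝ) 1, X ≤ t * K) : X ≤ 0 := by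
  have hcont : Continuous fun t : ℝ => t * K := by fun_prop
  have hlim : Tendsto (fun t : ℝ => t * K) (𝓝[>] 0) (𝓝 0) :=
    (hcont.tendsto' 0 0 (zero_mul K)).mono_left nhdsWithin_le_nhds
  exact ge_of_tendsto hlim (eventually_of_mem (Ioc_mem_nhdsGT one_pos) h)

/-- Separating `(x, r x)` from the open strict epigraph of `r` gives a supporting hyperplane. -/
theorem ConvexOn.exists_strongDual_le_sub {E : Type*} [NormedAddCommGroup E] [NormedSpace ℝ E]
    {r : E → ℝ} (hr : ConvexOn ℝ univ r) (hcont : Continuous r) (x : E) :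
    ∃ g : StrongDual ℝ E, ∀ u, r x + g (u - x) ≤ r u := by
  set s : Set (E × ℝ) := {p | p.1 ∈ univ ∧ r p.1 < p.2}
  have hs_open : IsOpen s := by
    simp only [s, mem_univ, true_and]
    exact isOpen_lt (hcont.comp continuous_fst) continuous_snd
  obtain ⟨L, hL⟩ := geometric_hahn_banach_open_point hr.convex_strict_epigraph hs_open
    (by simp [s] : (x, r x) ∉ s)
  set g := L.comp (ContinuousLinearMap.inl ℝ E ℝ)
  set β := -L (0, 1)
  have hL_apply : ∀ u t, L (u, t) = g u - t * β := fun u t => by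
    have : (u, t) = (u, (0 : ℝ)) + t • ((0 : E), (1 : ℝ)) := by simp
    rw [this, map_add, map_smul, smul_eq_mul]
    simp [g, β]
  have hbelow : ∀ u, ∀ δ > 0, g u - g x - β * (r u - r x) < δ * β := fun u δ hδ => by
    have := hL (u, r u + δ) (by simp [hδ])
    rw [hL_apply, hL_apply] at this
    linarith
  have hβ : 0 < β := by simpa using hbelow x 1 one_pos
  refine ⟨β⁻¹ • g, fun u => ?_⟩
  have hsupp : g u - g x ≤ β * (r u - r x) :=
    le_of_forall_pos_lt_add fun ε hε => by
      simpa [div_mul_cancel₀ ε hβ.ne', add_comm, sub_eq_add_neg] using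
        hbelow u (ε / β) (div_pos hε hβ)
  have : β⁻¹ * (g u - g x) ≤ r u - r x := by
    rw [inv_mul_le_iff₀ hβ]; exact hsupp
  simp only [smul_apply, map_sub, smul_eq_mul]
  linarith

section Subderiv

variable {E : Type*} [NormedAddCommGroup E] [InnerProductSpace ℝ E]

theorem ConvexOn.subderiv_nonempty [FiniteDimensional ℝ E] {r : E → ℝ} (hr : ConvexOn ℝ univ r)
    (x : E) : (subderiv r x).Nonempty := by
  obtain ⟨g, hg⟩ := hr.exists_strongDual_le_sub
    (continuousOn_univ.mp (hr.continuousOn isOpen_univ)) x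
  refine ⟨(InnerProductSpace.toDual ℝ E).symm g, fun u => ?_⟩
  simpa only [InnerProductSpace.toDual_symm_apply] using hg u

theorem mem_subderiv_of_forall_add_sq_le {f : E → ℝ} {g x : E} {μ : ℝ} (hμ : 0 ≤ μ)
    (hf : ∀ u, f x + ⟪g, u - x⟫ + μ / 2 * ‖u - x‖ ^ 2 ≤ f u) : g ∈ subderiv f x := fun u => by
  nlinarith [hf u, sq_nonneg ‖u - x‖]

theorem add_mem_subderiv_add {f r : E → ℝ} {x ξ η : E} (hξ : ξ ∈ subderiv f x)
    (hη : η ∈ subderiv r x) : ξ + η ∈ subderiv (fun u => f u + r u) x := fun u => by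
  rw [inner_add_left]
  linarith [hξ u, hη u]

/-- Comparing `y` with `y + t • (u - y) ∈ Y` bounds the subgradient defect by `t ρ/2 ‖u - y‖²`;
then let `t → 0`. -/
theorem sub_smul_mem_subderivOn_of_isMaxOn {φ : E → ℝ} {Y : Set E} (hφ : ConvexOn ℝ Y φ)
    {a y y0 : E} {ρ : ℝ} (hy : y ∈ Y)
    (hmax : IsMaxOn (fun u => ⟪u, a⟫ - φ u - ρ / 2 * ‖u - y0‖ ^ 2) Y y) :
    a - ρ • (y - y0) ∈ subderivOn φ Y y := by
  intro u hu
  suffices ⟪a, u - y⟫ - ρ * ⟪y - y0, u - y⟫ - (φ u - φ y) ≤ 0 by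
    rw [inner_sub_left, real_inner_smul_left]
    linarith
  refine nonpos_of_forall_le_mul (K := ρ / 2 * ‖u - y‖ ^ 2) fun t ⟨ht0, ht1⟩ => ?_
  have hseg : (1 - t) • y + t • u = y + t • (u - y) := by module
  have hφt := hφ.2 hy hu (sub_nonneg.mpr ht1) ht0.le (by ring)
  have hmaxt := isMaxOn_iff.mp hmax _ (hseg ▸ hφ.1 hy hu (sub_nonneg.mpr ht1) ht0.le (by ring))
  rw [hseg, smul_eq_mul, smul_eq_mul] at hφt
  have hnorm : ‖y + t • (u - y) - y0‖ ^ 2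
      = ‖y - y0‖ ^ 2 + 2 * (t * ⟪y - y0, u - y⟫) + t ^ 2 * ‖u - y‖ ^ 2 := by
    rw [show y + t • (u - y) - y0 = (y - y0) + t • (u - y) by abel, norm_add_sq_real,
      real_inner_smul_right, norm_smul, mul_pow, Real.norm_eq_abs, sq_abs]
  simp only [inner_add_left, real_inner_smul_left, hnorm, real_inner_comm a (u - y)] at hmaxt
  refine le_of_mul_le_mul_left ?_ ht0
  nlinarith

end Subderiv

theorem stmt_18_general {n m : ℕ}
    (f r : EuclideanSpace ℝ (Fin n) → ℝ)
    (f' : EuclideanSpace ℝ (Fin n) → EuclideanSpace ℝ (Fin n)) (μ : ℝ) (hμ : 0 < μ)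
    (hf : ∀ u v : EuclideanSpace ℝ (Fin n),
      f v + ⟪f' v, u - v⟫ + μ / 2 * ‖u - v‖ ^ 2 ≤ f u)
    (hr : ConvexOn ℝ Set.univ r)
    (A : EuclideanSpace ℝ (Fin n) →L[ℝ] EuclideanSpace ℝ (Fin m))
    (Yd : Set (EuclideanSpace ℝ (Fin m)))
    (φ : EuclideanSpace ℝ (Fin m) → ℝ) (hφ : ConvexOn ℝ Yd φ)
    (Dφ : ℝ) (hDpos : 0 < Dφ) (hD : ∀ y1 ∈ Yd, ∀ y2 ∈ Yd, ‖y1 - y2‖ ≤ Dφ)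
    (ε : ℝ) (hε : 0 < ε) (ρ : ℝ) (hρ : ρ = ε / Dφ)
    (y0 : EuclideanSpace ℝ (Fin m)) (hy0 : y0 ∈ Yd)
    (xbar : EuclideanSpace ℝ (Fin n)) (ybar : EuclideanSpace ℝ (Fin m)) (hybar : ybar ∈ Yd)
    (hmax : ∀ y ∈ Yd,
      ⟪y, A xbar⟫ - φ y - ρ / 2 * ‖y - y0‖ ^ 2 ≤
        ⟪ybar, A xbar⟫ - φ ybar - ρ / 2 * ‖ybar - y0‖ ^ 2)
    (hstat : Metric.infDist 0 {v : EuclideanSpace ℝ (Fin n) | ∃ ξ ∈ subderiv r xbar,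
        v = f' xbar + ContinuousLinearMap.adjoint A ybar + ξ} ≤ ε) :
    Metric.infDist 0 {w : EuclideanSpace ℝ (Fin n) |
        ∃ ξG ∈ subderiv (fun u => f u + r u) xbar,
          w = ξG + ContinuousLinearMap.adjoint A ybar} ≤ ε ∧
    Metric.infDist 0 {v : EuclideanSpace ℝ (Fin m) | ∃ ζ ∈ subderivOn φ Yd ybar,
        v = A xbar - ζ} ≤ ε := by
  refine ⟨(Metric.infDist_le_infDist_of_subset ?_ ?_).trans hstat, ?_⟩
  · rintro _ ⟨ξ, hξ, rfl⟩
    exact ⟨f' xbar + ξ,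
      add_mem_subderiv_add (mem_subderiv_of_forall_add_sq_le hμ.le fun u => hf u xbar) hξ, by abel⟩
  · obtain ⟨ξ, hξ⟩ := hr.subderiv_nonempty xbar
    exact ⟨_, ξ, hξ, rfl⟩
  · have hρ0 : 0 ≤ ρ := hρ ▸ (div_pos hε hDpos).le
    have hζ := sub_smul_mem_subderivOn_of_isMaxOn hφ hybar (isMaxOn_iff.mpr hmax)
    calc Metric.infDist 0 _ ≤ dist 0 (A xbar - (A xbar - ρ • (ybar - y0))) :=
          Metric.infDist_le_dist_of_mem (by exact ⟨_, hζ, rfl⟩)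
      _ = ρ * ‖ybar - y0‖ := by
          rw [dist_zero_left, sub_sub_cancel, norm_smul, Real.norm_of_nonneg hρ0]
      _ ≤ ρ * Dφ := by gcongr; exact hD ybar hybar y0 hy0
      _ = ε := by rw [hρ]; field_simp

/-- An `ε`-stationary point of Nesterov's smoothed problem (with `ρ = ε/D_φ`) yields
an `ε`-saddle point of the original bilinear saddle-point problem:
`dist(0, ∂G(x̄) + A^⊤ȳ) ≤ ε` and `dist(0, A x̄ − ∂φ(ȳ)) ≤ ε`,
where `ȳ` is the maximizer defining `h_ρ(x̄)` and `∂G(x̄) = ∇f(x̄) + ∂r(x̄)`. -/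
theorem stmt_18 {n m : ℕ}
    (f r : EuclideanSpace ℝ (Fin n) → ℝ)
    (f' : EuclideanSpace ℝ (Fin n) → EuclideanSpace ℝ (Fin n)) (μ : ℝ) (hμ : 0 < μ)
    (hf : ∀ u v : EuclideanSpace ℝ (Fin n),
      f v + ⟪f' v, u - v⟫ + μ / 2 * ‖u - v‖ ^ 2 ≤ f u)
    (hr : ConvexOn ℝ Set.univ r)
    (A : EuclideanSpace ℝ (Fin n) →L[ℝ] EuclideanSpace ℝ (Fin m))
    (Yd : Set (EuclideanSpace ℝ (Fin m))) (hYne : Yd.Nonempty) (hYcl : IsClosed Yd)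
    (φ : EuclideanSpace ℝ (Fin m) → ℝ) (hφ : ConvexOn ℝ Yd φ)
    (hφlsc : LowerSemicontinuousOn φ Yd)
    (Dφ : ℝ) (hDpos : 0 < Dφ) (hD : ∀ y1 ∈ Yd, ∀ y2 ∈ Yd, ‖y1 - y2‖ ≤ Dφ)
    (ε : ℝ) (hε : 0 < ε) (ρ : ℝ) (hρ : ρ = ε / Dφ)
    (y0 : EuclideanSpace ℝ (Fin m)) (hy0 : y0 ∈ Yd)
    (xbar : EuclideanSpace ℝ (Fin n)) (ybar : EuclideanSpace ℝ (Fin m)) (hybar : ybar ∈ Yd)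
    (hmax : ∀ y ∈ Yd,
      ⟪y, A xbar⟫ - φ y - ρ / 2 * ‖y - y0‖ ^ 2 ≤
        ⟪ybar, A xbar⟫ - φ ybar - ρ / 2 * ‖ybar - y0‖ ^ 2)
    (hstat : Metric.infDist 0 {v : EuclideanSpace ℝ (Fin n) | ∃ ξ ∈ subderiv r xbar,
        v = f' xbar + ContinuousLinearMap.adjoint A ybar + ξ} ≤ ε) :
    Metric.infDist 0 {w : EuclideanSpace ℝ (Fin n) |
        ∃ ξG ∈ subderiv (fun u => f u + r u) xbar,
          w = ξG + ContinuousLinearMap.adjoint A ybar} ≤ ε ∧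
    Metric.infDist 0 {v : EuclideanSpace ℝ (Fin m) | ∃ ζ ∈ subderivOn φ Yd ybar,
        v = A xbar - ζ} ≤ ε :=
  stmt_18_general f r f' μ hμ hf hr A Yd φ hφ Dφ hDpos hD ε hε ρ hρ y0 hy0 xbar ybar hybar hmax
    hstat
end
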